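/- arXiv:1301.0408 — 7 statements merged into one kernel-verified Lean document; each statement's English description precedes it below -/
import Mathlib

section
/- Modica–Mortola lower bound: Let V : ℝ → ℝ be continuous with V(s) ≥ 0 for all s, let a < b be real numbers, and let u : ℝ → ℝ be continuously differentiable. Define Φ(v) = ∫_0^v √(2·V(s)) ds. Then ∫_a^b ( (1/2)·(u'(x))² + V(u(x)) ) dx ≥ |Φ(u(b)) − Φ(u(a))|. -/
/-!
Set `g = √(2V)`, so that `Φ' = g`. By the chain rule `Φ(u b) - Φ(u a) = ∫_a^b g(u) u'`, and
pointwise AM–GM gives `|g(u) u'| ≤ u'²/2 + g(u)²/2 = u'²/2 + V(u)`.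
-/

open MeasureTheory

theorem abs_sqrt_two_mul_mul_le {v : ℝ} (hv : 0 ≤ v) (p : ℝ) :
    |√(2 * v) * p| ≤ 1 / 2 * p ^ 2 + v := by
  have hsq : √(2 * v) ^ 2 = 2 * v := Real.sq_sqrt (by linarith)
  rw [abs_mul, abs_of_nonneg (Real.sqrt_nonneg _)]
  nlinarith [sq_nonneg (√(2 * v) - |p|), sq_abs p]

theorem integral_sub_integral_eq_integral_comp_mul_deriv {g u : ℝ → ℝ} (hg : Continuous g)
    (hu : ContDiff ℝ 1 u) (a b c : ℝ) :
    (∫ s in c..u b, g s) - ∫ s in c..u a, g s = ∫ x in a..b, g (u x) * deriv u x := by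
  rw [intervalIntegral.integral_interval_sub_left (hg.intervalIntegrable _ _)
    (hg.intervalIntegrable _ _)]
  exact (intervalIntegral.integral_comp_mul_deriv
    (fun x _ => (hu.differentiable one_ne_zero x).hasDerivAt)
    (hu.continuous_deriv le_rfl).continuousOn hg).symm

/-- Modica–Mortola lower bound: for continuous nonnegative `V`, `a < b`, and `u` of class `C¹`,
the energy `∫_a^b ((1/2) u'² + V(u))` dominates `|Φ(u b) − Φ(u a)|`, where
`Φ(v) = ∫_0^v √(2 V(s)) ds`. -/
theorem modica_mortola_lower_bound
    (V : ℝ → ℝ) (hVc : Continuous V) (hV0 : ∀ s, 0 ≤ V s)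
    (a b : ℝ) (hab : a < b)
    (u : ℝ → ℝ) (hu : ContDiff ℝ 1 u) :
    |(∫ s in (0:ℝ)..(u b), Real.sqrt (2 * V s)) -
        (∫ s in (0:ℝ)..(u a), Real.sqrt (2 * V s))| ≤
      ∫ x in a..b, ((1/2) * (deriv u x)^2 + V (u x)) := by
  have hg : Continuous fun s => √(2 * V s) := (continuous_const.mul hVc).sqrt
  have hu' : Continuous (deriv u) := hu.continuous_deriv le_rfl
  have huc : Continuous u := hu.continuous
  rw [integral_sub_integral_eq_integral_comp_mul_deriv hg hu]
  calc |∫ x in a..b, √(2 * V (u x)) * deriv u x|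
      ≤ ∫ x in a..b, |√(2 * V (u x)) * deriv u x| :=
        intervalIntegral.abs_integral_le_integral_abs hab.le
    _ ≤ ∫ x in a..b, ((1/2) * (deriv u x)^2 + V (u x)) :=
        intervalIntegral.integral_mono_on hab.le
          (((hg.comp huc).mul hu').abs.intervalIntegrable a b)
          (((continuous_const.mul (hu'.pow 2)).add (hVc.comp huc)).intervalIntegrable a b)
          fun x _ => abs_sqrt_two_mul_mul_le (hV0 (u x)) (deriv u x)
end

section
/- Lower bound for the transition cost on the whole line: Let V : ℝ → ℝ be continuous with V(s) ≥ 0 for all s. Let u : ℝ → ℝ be continuously differentiable with u(x) → −1 as x → −∞ and u(x) → 1 as x → +∞, and suppose the function x ↦ (1/2)·(u'(x))² + V(u(x)) is integrable on ℝ. Then ∫_ℝ ( (1/2)·(u'(x))² + V(u(x)) ) dx ≥ ∫_{-1}^{1} √(2·V(s)) ds. -/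
/-!
Bogomol'nyi trick: by AM–GM, `½ u'² + V(u) ≥ √(2 V(u)) · u'`, and the right-hand side is the
derivative of `G ∘ u` for a primitive `G` of `√(2V)`. Integrating over `[-n, n]` therefore bounds
`∫_{u(-n)}^{u(n)} √(2V)` by the energy, and letting `n → ∞` moves the endpoints to `∓1`.
-/

open MeasureTheory Filter Set Topology

theorem sqrt_two_mul_mul_le_half_sq_add (a : ℝ) {v : ℝ} (hv : 0 ≤ v) :
    √(2 * v) * a ≤ 1 / 2 * a ^ 2 + v := by
  have hsq : √(2 * v) ^ 2 = 2 * v := Real.sq_sqrt (by positivity)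
  nlinarith [sq_nonneg (a - √(2 * v))]

theorem intervalIntegral_comp_le_of_mul_deriv_le {f f' g e : ℝ → ℝ} {a b : ℝ} (hab : a ≤ b)
    (hf : ∀ x ∈ Icc a b, HasDerivAt f (f' x) x) (hf' : ContinuousOn f' (Icc a b))
    (hg : Continuous g) (he : IntervalIntegrable e volume a b)
    (hle : ∀ x ∈ Icc a b, g (f x) * f' x ≤ e x) :
    ∫ s in f a..f b, g s ≤ ∫ x in a..b, e x := by
  rw [← uIcc_of_le hab] at hf hf'
  rw [← intervalIntegral.integral_comp_mul_deriv hf hf' hg]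
  have hfc : ContinuousOn f (uIcc a b) := fun x hx => (hf x hx).continuousAt.continuousWithinAt
  refine intervalIntegral.integral_mono_on hab ?_ he hle
  exact ((hg.comp_continuousOn hfc).mul hf').intervalIntegrable

theorem intervalIntegral_le_integral_of_nonneg {e : ℝ → ℝ} (he : Integrable e) (he0 : 0 ≤ e)
    {a b : ℝ} (hab : a ≤ b) : ∫ x in a..b, e x ≤ ∫ x, e x := by
  rw [intervalIntegral.integral_of_le hab]
  exact setIntegral_le_integral he (.of_forall he0)

theorem tendsto_intervalIntegral_of_tendsto {ι : Type*} {l : Filter ι} {g : ℝ → ℝ}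
    (hg : ∀ a b, IntervalIntegrable g volume a b) {f₁ f₂ : ι → ℝ} {a b : ℝ}
    (h₁ : Tendsto f₁ l (𝓝 a)) (h₂ : Tendsto f₂ l (𝓝 b)) :
    Tendsto (fun i => ∫ s in f₁ i..f₂ i, g s) l (𝓝 (∫ s in a..b, g s)) := by
  have hG := intervalIntegral.continuous_primitive hg 0
  have hsub (x y : ℝ) : (∫ s in 0..y, g s) - ∫ s in 0..x, g s = ∫ s in x..y, g s :=
    intervalIntegral.integral_interval_sub_left (hg 0 y) (hg 0 x)
  rw [← hsub]
  exact (((hG.tendsto b).comp h₂).sub ((hG.tendsto a).comp h₁)).congr fun i => hsub _ _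

/-- Lower bound for the transition cost on the whole line: if `u` is `C¹`, connects `−1` at `−∞`
to `1` at `+∞`, and its energy density is integrable, then its total energy is at least
`∫_{-1}^{1} √(2 V(s)) ds`. -/
theorem whole_line_transition_lower_bound
    (V : ℝ → ℝ) (hVc : Continuous V) (hV0 : ∀ s, 0 ≤ V s)
    (u : ℝ → ℝ) (hu : ContDiff ℝ 1 u)
    (hbot : Tendsto u atBot (nhds (-1)))
    (htop : Tendsto u atTop (nhds 1))
    (hint : Integrable (fun x => (1/2) * (deriv u x)^2 + V (u x))) :
    (∫ s in (-1:ℝ)..1, Real.sqrt (2 * V s)) ≤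
      ∫ x : ℝ, ((1/2) * (deriv u x)^2 + V (u x)) := by
  have hg : Continuous fun s => √(2 * V s) := (continuous_const.mul hVc).sqrt
  have hdu (x : ℝ) : HasDerivAt u (deriv u x) x := (hu.differentiable one_ne_zero x).hasDerivAt
  have hdensity_nonneg : 0 ≤ fun x => (1/2) * (deriv u x)^2 + V (u x) := fun x => by
    have := hV0 (u x)
    positivity
  have hbound (n : ℝ) (hn : 0 ≤ n) :
      ∫ s in u (-n)..u n, √(2 * V s) ≤ ∫ x : ℝ, ((1/2) * (deriv u x)^2 + V (u x)) :=
    calc ∫ s in u (-n)..u n, √(2 * V s)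
        ≤ ∫ x in -n..n, ((1/2) * (deriv u x)^2 + V (u x)) :=
          intervalIntegral_comp_le_of_mul_deriv_le (by linarith) (fun x _ => hdu x)
            (hu.continuous_deriv le_rfl).continuousOn hg hint.intervalIntegrable
            fun x _ => sqrt_two_mul_mul_le_half_sq_add _ (hV0 _)
      _ ≤ _ := intervalIntegral_le_integral_of_nonneg hint hdensity_nonneg (by linarith)
  have hlim := tendsto_intervalIntegral_of_tendsto (fun a b => hg.intervalIntegrable a b)
    (hbot.comp tendsto_neg_atTop_atBot) htop
  exact le_of_tendsto hlim ((eventually_ge_atTop 0).mono hbound)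
end

section
/- Exponential decay of the energy minimizer (Lemma 2.1): Assume V satisfies Assumption 1. Let m : ℝ → ℝ be differentiable with m'(x) = √(2·V(m(x))) for all x, m(0) = 0, and −1 < m(x) < 1 for all x. Then there exists C < ∞ such that for all x ≥ 0, 1 − m(x) ≤ C·exp(−√(V''(1)/2)·x), and for all x ≤ 0, m(x) + 1 ≤ C·exp(−√(V''(1)/2)·|x|). -/
/-- Assumption 1: `V` is smooth, even, nonnegative, and on `(0,∞)` it vanishes only at `1`,
its derivative vanishes only at `1`, `V''(1) > 0`, and `V` grows at least like `u^{1+β}`. -/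
structure Assumption1 (V : ℝ → ℝ) : Prop where
  smooth : ContDiff ℝ (⊤ : ℕ∞) V
  even : ∀ u : ℝ, V (-u) = V u
  nonneg : ∀ u : ℝ, 0 ≤ V u
  zero_iff : ∀ u : ℝ, 0 < u → (V u = 0 ↔ u = 1)
  deriv_zero_iff : ∀ u : ℝ, 0 < u → (deriv V u = 0 ↔ u = 1)
  second_deriv_pos : 0 < deriv (deriv V) 1
  growth : ∃ C : ℝ, 0 < C ∧ ∃ β : ℝ, 0 < β ∧ ∀ u : ℝ, C ≤ u → u ^ (1 + β) / C ≤ V u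

lemma pos_side (V : ℝ → ℝ) (hV : Assumption1 V)
    (m : ℝ → ℝ) (hm : Differentiable ℝ m)
    (hode : ∀ x : ℝ, deriv m x = Real.sqrt (2 * V (m x)))
    (h0 : m 0 = 0) (hbd : ∀ x : ℝ, -1 < m x ∧ m x < 1) :
    ∃ C : ℝ, ∀ x : ℝ, 0 ≤ x →
      1 - m x ≤ C * Real.exp (-(Real.sqrt (deriv (deriv V) 1 / 2)) * x) := by
  set c : ℝ := deriv (deriv V) 1 with hc_def
  have hc : 0 < c := hV.second_deriv_pos
  set lam : ℝ := Real.sqrt (c / 2) with hlam_def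
  have hlam : 0 < lam := Real.sqrt_pos.mpr (by positivity)
  have hVdiff : Differentiable ℝ V := hV.smooth.differentiable (by simp)
  have hVsm : ContDiff ℝ (⊤ : ℕ∞) V := hV.smooth.of_le (by simp)
  have hV1smooth : ContDiff ℝ (⊤ : ℕ∞) (deriv V) := (contDiff_infty_iff_deriv.mp hVsm).2
  have hV1diff : Differentiable ℝ (deriv V) := hV1smooth.differentiable (by simp)
  have hV2cont : Continuous (deriv (deriv V)) :=
    ((contDiff_infty_iff_deriv.mp hV1smooth).2).continuous
  have hV1zero : V 1 = 0 := (hV.zero_iff 1 one_pos).mpr rfl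
  have hdV1zero : deriv V 1 = 0 := (hV.deriv_zero_iff 1 one_pos).mpr rfl
  -- m is monotone
  have hmono : Monotone m := by
    apply monotone_of_deriv_nonneg hm
    intro x; rw [hode]; positivity
  -- deriv V < 0 on (0,1)
  have hVneg : ∀ u ∈ Set.Ioo (0:ℝ) 1, deriv V u < 0 := by
    intro u hu
    have hVu : 0 < V u := by
      rcases (hV.nonneg u).lt_or_eq with h | h
      · exact h
      · exact absurd ((hV.zero_iff u hu.1).mp h.symm) hu.2.ne
    obtain ⟨ξ, hξmem, hξ⟩ := exists_hasDerivAt_eq_slope V (deriv V) hu.2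
      (hVdiff.continuous.continuousOn) (fun x _ => (hVdiff x).hasDerivAt)
    have hξneg : deriv V ξ < 0 := by
      rw [hξ, hV1zero]
      have : 1 - u > 0 := by linarith [hu.2]
      apply div_neg_of_neg_of_pos <;> linarith
    by_contra h
    push_neg at h
    have hne : deriv V u ≠ 0 := fun h0 => hu.2.ne ((hV.deriv_zero_iff u hu.1).mp h0)
    have hpos : 0 < deriv V u := lt_of_le_of_ne h (Ne.symm hne)
    have hsub : Set.Ioo (deriv V ξ) (deriv V u) ⊆ deriv V '' Set.Ioo u ξ :=
      intermediate_value_Ioo' (le_of_lt hξmem.1) hV1diff.continuous.continuousOn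
    obtain ⟨z, hz, hz0⟩ := hsub ⟨hξneg, hpos⟩
    have hz01 : 0 < z := lt_trans hu.1 hz.1
    have : z = 1 := (hV.deriv_zero_iff z hz01).mp hz0
    linarith [hz.2, hξmem.2]
  -- V strictly antitone on [0,1]
  have hanti : StrictAntiOn V (Set.Icc (0:ℝ) 1) := by
    apply strictAntiOn_of_deriv_neg (convex_Icc 0 1) hVdiff.continuous.continuousOn
    rw [interior_Icc]; exact hVneg
  -- auxiliary g and its derivatives
  set g : ℝ → ℝ := fun u => V u - c / 4 * (1 - u) ^ 2 with hg_def
  have hg' : ∀ u : ℝ, HasDerivAt g (deriv V u + c / 2 * (1 - u)) u := by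
    intro u
    have h1 : HasDerivAt (fun u : ℝ => c / 4 * (1 - u) ^ 2)
        (c / 4 * ((2 : ℕ) * (1 - u) ^ 1 * (0 - 1))) u :=
      (((hasDerivAt_const u (1:ℝ)).sub (hasDerivAt_id u)).pow 2).const_mul (c / 4)
    have := ((hVdiff u).hasDerivAt).sub h1
    exact this.congr_deriv (by ring)
  have hgderiv : deriv g = fun u => deriv V u + c / 2 * (1 - u) :=
    funext fun u => (hg' u).deriv
  have hg'' : ∀ u : ℝ, HasDerivAt (deriv g) (deriv (deriv V) u - c / 2) u := by
    intro u
    rw [hgderiv]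
    have h1 := (hV1diff u).hasDerivAt
    have h2 : HasDerivAt (fun u : ℝ => c / 2 * (1 - u)) (c / 2 * (0 - 1)) u :=
      ((hasDerivAt_const u (1:ℝ)).sub (hasDerivAt_id u)).const_mul (c / 2)
    have := h1.add h2
    exact this.congr_deriv (by ring)
  -- find δ-ball where second derivative of g is positive
  have hev : ∀ᶠ u in nhds (1:ℝ), c / 2 < deriv (deriv V) u :=
    (hV2cont.continuousAt (x := (1:ℝ))).eventually (eventually_gt_nhds (by linarith))
  obtain ⟨δ, hδpos, hball⟩ := Metric.eventually_nhds_iff.mp hev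
  set a : ℝ := max (1 - δ / 2) (1 / 2) with ha_def
  have ha0 : 0 < a := lt_of_lt_of_le (by norm_num) (le_max_right _ _)
  have ha1 : a < 1 := by
    apply max_lt <;> [linarith; norm_num]
  have hball' : ∀ u : ℝ, a < u → u ≤ 1 → c / 2 < deriv (deriv V) u := by
    intro u h1u h2u
    apply hball
    rw [Real.dist_eq, abs_of_nonpos (by linarith)]
    have : 1 - δ / 2 ≤ a := le_max_left _ _
    linarith
  -- deriv g strictly monotone on [a,1]
  have hg1 : deriv g 1 = 0 := by rw [hgderiv]; simp [hdV1zero]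
  have hgdiff : Differentiable ℝ g := fun u => (hg' u).differentiableAt
  have hgdcont : Continuous (deriv g) := by
    rw [hgderiv]
    exact (hV1smooth.continuous).add (continuous_const.mul (continuous_const.sub continuous_id))
  have hsm : StrictMonoOn (deriv g) (Set.Icc a 1) := by
    apply strictMonoOn_of_deriv_pos (convex_Icc a 1) hgdcont.continuousOn
    rw [interior_Icc]
    intro u hu
    rw [(hg'' u).deriv]
    have := hball' u hu.1 hu.2.le
    linarith
  have hgdneg : ∀ u ∈ Set.Ico a 1, deriv g u < 0 := by
    intro u hu
    have := hsm ⟨hu.1, hu.2.le⟩ ⟨le_trans hu.1 hu.2.le, le_refl 1⟩ hu.2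
    rwa [hg1] at this
  have hganti : StrictAntiOn g (Set.Icc a 1) := by
    apply strictAntiOn_of_deriv_neg (convex_Icc a 1) hgdiff.continuous.continuousOn
    rw [interior_Icc]
    intro u hu
    exact hgdneg u ⟨hu.1.le, hu.2⟩
  have hVlower : ∀ u ∈ Set.Icc a 1, c / 4 * (1 - u) ^ 2 ≤ V u := by
    intro u hu
    rcases eq_or_lt_of_le hu.2 with h | h
    · rw [h]; simp [hV1zero]
    · have := hganti hu ⟨le_trans hu.1 hu.2, le_refl 1⟩ h
      have hg1v : g 1 = 0 := by simp [hg_def, hV1zero]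
      rw [hg1v] at this
      simp only [hg_def] at this
      linarith
  -- square-root lower bound
  have hsqrt : ∀ u ∈ Set.Icc a 1, lam * (1 - u) ≤ Real.sqrt (2 * V u) := by
    intro u hu
    have h1 : c / 2 * (1 - u) ^ 2 ≤ 2 * V u := by
      have := hVlower u hu; linarith
    calc lam * (1 - u) = Real.sqrt (c / 2) * Real.sqrt ((1 - u) ^ 2) := by
          rw [Real.sqrt_sq (by linarith [hu.2])]
      _ = Real.sqrt (c / 2 * (1 - u) ^ 2) := (Real.sqrt_mul (by positivity) _).symm
      _ ≤ Real.sqrt (2 * V u) := Real.sqrt_le_sqrt h1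
  -- V a > 0 and the speed lower bound
  have hVa : 0 < V a := by
    rcases (hV.nonneg a).lt_or_eq with h | h
    · exact h
    · exact absurd ((hV.zero_iff a ha0).mp h.symm) ha1.ne
  set ε : ℝ := Real.sqrt (2 * V a) with hε_def
  have hεpos : 0 < ε := Real.sqrt_pos.mpr (by positivity)
  set x₀ : ℝ := a / ε with hx₀_def
  have hx₀pos : 0 < x₀ := div_pos ha0 hεpos
  -- m reaches a by time x₀
  have hax : a ≤ m x₀ := by
    by_contra h
    push_neg at h
    have hspeed : ∀ x ∈ Set.Ioo (0:ℝ) x₀, ε ≤ deriv m x := by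
      intro x hx
      have hmx_le : m x ≤ m x₀ := hmono hx.2.le
      have hmx0 : 0 ≤ m x := h0 ▸ hmono hx.1.le
      have hVmx : V a ≤ V (m x) := by
        rcases eq_or_lt_of_le (le_of_lt (lt_of_le_of_lt hmx_le h)) with heq | hlt
        · rw [heq]
        · exact le_of_lt (hanti ⟨hmx0, by linarith [ha1]⟩ ⟨ha0.le, ha1.le⟩ hlt)
      rw [hode]
      exact Real.sqrt_le_sqrt (by linarith)
    have hmon2 : MonotoneOn (fun x => m x - ε * x) (Set.Icc 0 x₀) := by
      apply monotoneOn_of_deriv_nonneg (convex_Icc 0 x₀)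
      · exact (hm.continuous.sub (continuous_const.mul continuous_id)).continuousOn
      · intro x hx
        exact ((hm x).sub ((differentiable_id.const_mul ε) x)).differentiableWithinAt
      · intro x hx
        rw [interior_Icc] at hx
        have hd : deriv (fun x => m x - ε * x) x = deriv m x - ε := by
          have : HasDerivAt (fun x => m x - ε * x) (deriv m x - ε * 1) x :=
            (hm x).hasDerivAt.sub ((hasDerivAt_id x).const_mul ε)
          rw [this.deriv]; ring
        rw [hd]
        linarith [hspeed x hx]
    have := hmon2 ⟨le_refl 0, hx₀pos.le⟩ ⟨hx₀pos.le, le_refl x₀⟩ hx₀pos.le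
    simp only [h0, mul_zero, sub_zero] at this
    rw [hx₀_def] at this
    rw [mul_div_cancel₀ a hεpos.ne'] at this
    linarith [h, this, hx₀_def ▸ this]
  -- Grönwall
  set φ : ℝ → ℝ := fun x => (1 - m x) * Real.exp (lam * x) with hφ_def
  have hφ' : ∀ x : ℝ, HasDerivAt φ
      ((0 - deriv m x) * Real.exp (lam * x) + (1 - m x) * (Real.exp (lam * x) * (lam * 1))) x := by
    intro x
    exact ((hasDerivAt_const x (1:ℝ)).sub (hm x).hasDerivAt).mul
      (((hasDerivAt_id x).const_mul lam).exp)
  have hφanti : AntitoneOn φ (Set.Ici x₀) := by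
    apply antitoneOn_of_deriv_nonpos (convex_Ici x₀)
    · exact ((continuous_const.sub hm.continuous).mul
        ((continuous_const.mul continuous_id).rexp)).continuousOn
    · intro x hx
      exact (hφ' x).differentiableAt.differentiableWithinAt
    · intro x hx
      rw [interior_Ici] at hx
      rw [(hφ' x).deriv]
      have hmx : m x ∈ Set.Icc a 1 := ⟨le_trans hax (hmono (le_of_lt hx)), (hbd x).2.le⟩
      have hkey : lam * (1 - m x) ≤ deriv m x := by
        rw [hode]; exact hsqrt (m x) hmx
      have hexp : 0 < Real.exp (lam * x) := Real.exp_pos _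
      nlinarith [hkey, hexp]
  refine ⟨2 * Real.exp (lam * x₀), fun x hx => ?_⟩
  have hAB : Real.exp (lam * x) * Real.exp (-lam * x) = 1 := by
    rw [← Real.exp_add]; ring_nf; exact Real.exp_zero
  rcases le_total x x₀ with hle | hle
  · -- x ≤ x₀
    have h1 : 1 - m x ≤ 2 := by linarith [(hbd x).1]
    have h2 : (1:ℝ) ≤ Real.exp (lam * x₀) * Real.exp (-lam * x) := by
      rw [← Real.exp_add]
      apply Real.one_le_exp
      nlinarith [hlam]
    calc 1 - m x ≤ 2 := h1
      _ ≤ 2 * (Real.exp (lam * x₀) * Real.exp (-lam * x)) := by linarith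
      _ = 2 * Real.exp (lam * x₀) * Real.exp (-lam * x) := by ring
  · -- x₀ ≤ x
    have hφle : φ x ≤ φ x₀ := hφanti (Set.self_mem_Ici) hle hle
    have hφx₀ : φ x₀ ≤ 2 * Real.exp (lam * x₀) := by
      have : 1 - m x₀ ≤ 2 := by linarith [(hbd x₀).1]
      have hexp : 0 < Real.exp (lam * x₀) := Real.exp_pos _
      simp only [hφ_def]
      nlinarith
    have hBpos : 0 < Real.exp (-lam * x) := Real.exp_pos _
    calc 1 - m x = (1 - m x) * Real.exp (lam * x) * Real.exp (-lam * x) := by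
          rw [mul_assoc, hAB, mul_one]
      _ ≤ 2 * Real.exp (lam * x₀) * Real.exp (-lam * x) := by
          apply mul_le_mul_of_nonneg_right _ hBpos.le
          exact le_trans hφle hφx₀

/-- Exponential decay of the energy minimizer (Lemma 2.1): if `m' = √(2 V(m))`, `m 0 = 0`,
and `−1 < m < 1`, then `m` converges to `±1` at rate `exp(−√(V''(1)/2) |x|)`. -/
theorem exponential_decay_of_minimizer
    (V : ℝ → ℝ) (hV : Assumption1 V)
    (m : ℝ → ℝ) (hm : Differentiable ℝ m)
    (hode : ∀ x : ℝ, deriv m x = Real.sqrt (2 * V (m x)))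
    (h0 : m 0 = 0) (hbd : ∀ x : ℝ, -1 < m x ∧ m x < 1) :
    ∃ C : ℝ,
      (∀ x : ℝ, 0 ≤ x →
        1 - m x ≤ C * Real.exp (-(Real.sqrt (deriv (deriv V) 1 / 2)) * x)) ∧
      (∀ x : ℝ, x ≤ 0 →
        m x + 1 ≤ C * Real.exp (-(Real.sqrt (deriv (deriv V) 1 / 2)) * |x|)) := by
  obtain ⟨C₁, hC₁⟩ := pos_side V hV m hm hode h0 hbd
  set mt : ℝ → ℝ := fun x => -m (-x) with hmt_def
  have hmtdiff : Differentiable ℝ mt := (hm.comp differentiable_neg).neg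
  have hmtderiv : ∀ x : ℝ, deriv mt x = deriv m (-x) := by
    intro x
    have h1 : HasDerivAt (fun x : ℝ => m (-x)) (deriv m (-x) * (-1)) x :=
      HasDerivAt.comp x (hm (-x)).hasDerivAt (hasDerivAt_neg x)
    have h2 : HasDerivAt mt (deriv m (-x)) x := by
      have := h1.neg
      exact this.congr_deriv (by ring)
    exact h2.deriv
  have hmtode : ∀ x : ℝ, deriv mt x = Real.sqrt (2 * V (mt x)) := by
    intro x
    rw [hmtderiv x, hode (-x)]
    congr 2
    rw [show mt x = -m (-x) from rfl, hV.even]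
  have hmt0 : mt 0 = 0 := by simp [hmt_def, h0]
  have hmtbd : ∀ x : ℝ, -1 < mt x ∧ mt x < 1 := by
    intro x
    constructor
    · simp only [hmt_def, neg_lt_neg_iff]; exact (hbd (-x)).2
    · have := (hbd (-x)).1
      simp only [hmt_def]
      linarith
  obtain ⟨C₂, hC₂⟩ := pos_side V hV mt hmtdiff hmtode hmt0 hmtbd
  refine ⟨max C₁ C₂, fun x hx => ?_, fun x hx => ?_⟩
  · calc 1 - m x ≤ C₁ * Real.exp (-(Real.sqrt (deriv (deriv V) 1 / 2)) * x) := hC₁ x hx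
      _ ≤ max C₁ C₂ * Real.exp (-(Real.sqrt (deriv (deriv V) 1 / 2)) * x) :=
        mul_le_mul_of_nonneg_right (le_max_left _ _) (Real.exp_pos _).le
  · have h1 : 0 ≤ -x := by linarith
    have h2 := hC₂ (-x) h1
    have h3 : 1 - mt (-x) = m x + 1 := by simp [hmt_def]; ring
    rw [h3] at h2
    rw [abs_of_nonpos hx]
    calc m x + 1 ≤ C₂ * Real.exp (-(Real.sqrt (deriv (deriv V) 1 / 2)) * -x) := h2
      _ ≤ max C₁ C₂ * Real.exp (-(Real.sqrt (deriv (deriv V) 1 / 2)) * -x) :=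
        mul_le_mul_of_nonneg_right (le_max_right _ _) (Real.exp_pos _).le
end

section
/- Long transitions are expensive (Lemma 2.3): Assume V satisfies Assumption 1. There exists C₁ < ∞ (depending only on V) such that for every M < ∞ and every δ ∈ (0, 1/2) there exists ℓ* < ∞ with the following property. For every ℓ ≥ ℓ* and all u₋, u₊ ∈ [−M, M], let A^bc be the set of continuously differentiable u : ℝ → ℝ with u(−2ℓ) = u₋ and u(2ℓ) = u₊, and let A₀^bc be the set of u ∈ A^bc such that u(x) ∈ [−1+δ, 1−δ] for all x ∈ [−ℓ, ℓ]. Then inf_{u ∈ A₀^bc} E_{(−2ℓ,2ℓ)}(u) − inf_{u ∈ A^bc} E_{(−2ℓ,2ℓ)}(u) ≥ 2·δ²·ℓ/C₁. -/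
open MeasureTheory

/-- The energy of `u` on `(a,b)`: `E_{(a,b)}(u) = ∫_a^b ((1/2) u'² + V(u))`. -/
noncomputable def energy (V : ℝ → ℝ) (a b : ℝ) (u : ℝ → ℝ) : ℝ :=
  ∫ x in a..b, ((1/2) * (deriv u x)^2 + V (u x))

lemma aux_V1 {V : ℝ → ℝ} (hV : Assumption1 V) : V 1 = 0 :=
  (hV.zero_iff 1 one_pos).mpr rfl

lemma aux_dV1 {V : ℝ → ℝ} (hV : Assumption1 V) : deriv V 1 = 0 :=
  (hV.deriv_zero_iff 1 one_pos).mpr rfl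

lemma aux_smooth_dV {V : ℝ → ℝ} (hV : Assumption1 V) :
    ContDiff ℝ ((⊤:ℕ∞):WithTop ℕ∞) (deriv V) :=
  (contDiff_infty_iff_deriv.mp (hV.smooth.of_le (by simp))).2

lemma aux_smooth_ddV {V : ℝ → ℝ} (hV : Assumption1 V) :
    ContDiff ℝ ((⊤:ℕ∞):WithTop ℕ∞) (deriv (deriv V)) :=
  (contDiff_infty_iff_deriv.mp (aux_smooth_dV hV)).2

lemma aux_V0 {V : ℝ → ℝ} (hV : Assumption1 V) : 0 < V 0 := by
  rcases lt_or_eq_of_le (hV.nonneg 0) with h | h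
  · exact h
  exfalso
  obtain ⟨c, hc, hmax⟩ := (isCompact_Icc (a := (0:ℝ)) (b := 1)).exists_isMaxOn
    ⟨0, by norm_num⟩ hV.smooth.continuous.continuousOn
  have hhalf : 0 < V (1/2) := by
    rcases lt_or_eq_of_le (hV.nonneg (1/2)) with h' | h'
    · exact h'
    · exact absurd ((hV.zero_iff (1/2) (by norm_num)).mp h'.symm) (by norm_num)
  have hVc : 0 < V c := lt_of_lt_of_le hhalf (hmax (by norm_num : (1:ℝ)/2 ∈ Set.Icc (0:ℝ) 1))
  have hc0 : c ≠ 0 := by rintro rfl; rw [← h] at hVc; exact lt_irrefl _ hVc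
  have hc1 : c ≠ 1 := by rintro rfl; rw [aux_V1 hV] at hVc; exact lt_irrefl _ hVc
  have hco : c ∈ Set.Ioo (0:ℝ) 1 :=
    ⟨lt_of_le_of_ne hc.1 (Ne.symm hc0), lt_of_le_of_ne hc.2 hc1⟩
  have : IsLocalMax V c := hmax.isLocalMax (Icc_mem_nhds hco.1 hco.2)
  exact hc1 ((hV.deriv_zero_iff c hco.1).mp this.deriv_eq_zero)

lemma aux_quad {V : ℝ → ℝ} (hV : Assumption1 V) :
    ∃ κ : ℝ, 0 < κ ∧ ∀ δ : ℝ, 0 < δ → δ < 1/2 → ∀ u : ℝ, |u| ≤ 1 - δ → κ * δ^2 ≤ V u := by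
  set c := deriv (deriv V) 1 with hc
  have hcpos := hV.second_deriv_pos
  -- find r with V'' ≥ c/2 on [1-r, 1+r]
  have hcont : ContinuousAt (deriv (deriv V)) 1 := (aux_smooth_ddV hV).continuous.continuousAt
  obtain ⟨r', hr', hball⟩ := Metric.continuousAt_iff.mp hcont (c/2) (by linarith)
  set r : ℝ := min (r'/2) (1/2) with hrdef
  have hrpos : 0 < r := lt_min (by linarith) (by norm_num)
  have hrle : r ≤ 1/2 := min_le_right _ _
  have hdd : ∀ x ∈ Set.Icc (1-r) (1+r), c/2 ≤ deriv (deriv V) x := by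
    intro x hx
    have : dist x 1 < r' := by
      rw [Real.dist_eq]
      have h1 : r ≤ r'/2 := min_le_left _ _
      have := hx.1; have := hx.2
      rw [abs_lt]; constructor <;> linarith
    have := hball this
    rw [Real.dist_eq, abs_lt] at this
    linarith
  -- step A : deriv V u ≤ -(c/2) * (1-u) on [1-r, 1]
  have hstepA : ∀ u ∈ Set.Icc (1-r) 1, deriv V u ≤ -(c/2) * (1-u) := by
    intro u hu
    have hconv : Convex ℝ (Set.Icc (1-r) (1+r)) := convex_Icc _ _
    have hder := hconv.mul_sub_le_image_sub_of_le_deriv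
      (aux_smooth_dV hV).continuous.continuousOn
      ((aux_smooth_dV hV).differentiable (by simp)).differentiableOn
      (fun x hx => hdd x (interior_subset hx))
      u ⟨hu.1, by have := hu.2; linarith⟩ 1 ⟨by linarith [hrpos], by linarith [hrpos]⟩ hu.2
    rw [aux_dV1 hV] at hder
    linarith
  -- step B : V u ≥ (c/4) * (1-u)^2 on [1-r, 1]
  have hstepB : ∀ u ∈ Set.Icc (1-r) 1, c/4 * (1-u)^2 ≤ V u := by
    intro u hu
    set g : ℝ → ℝ := fun x => V x - c/4 * (1-x)^2 with hg
    have hgd : ∀ x : ℝ, HasDerivAt g (deriv V x + c/2 * (1-x)) x := by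
      intro x
      have h1 : HasDerivAt V (deriv V x) x :=
        ((hV.smooth.differentiable (by simp)) x).hasDerivAt
      have h2 : HasDerivAt (fun x : ℝ => c/4 * (1-x)^2) (c/4 * (2*(1-x)*(-1))) x := by
        have : HasDerivAt (fun x : ℝ => (1-x)^2) (2*(1-x)*(-1)) x := by
          have hb : HasDerivAt (fun x : ℝ => 1 - x) (-1) x := by
            simpa using (hasDerivAt_id x).const_sub 1
          simpa using (hb.fun_pow 2)
        simpa using this.const_mul (c/4)
      have : HasDerivAt (fun x => V x - c/4 * (1-x)^2) _ x := h1.sub h2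
      convert this using 1; ring
    have hconv : Convex ℝ (Set.Icc (1-r) 1) := convex_Icc _ _
    have hder := hconv.image_sub_le_mul_sub_of_deriv_le (C := 0)
      (fun x hx => (hgd x).differentiableAt.continuousAt.continuousWithinAt)
      (fun x hx => (hgd x).differentiableAt.differentiableWithinAt)
      (fun x hx => by
        have hx' : x ∈ Set.Icc (1-r) 1 := interior_subset hx
        have := hstepA x hx'
        rw [(hgd x).deriv]
        linarith)
      u hu 1 ⟨by linarith [hrpos], le_refl 1⟩ hu.2
    have : g 1 = 0 := by simp [hg, aux_V1 hV]
    rw [this] at hder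
    simp only [hg] at hder
    linarith
  -- min of V on [0, 1-r]
  obtain ⟨x₀, hx₀, hmin⟩ := (isCompact_Icc (a := (0:ℝ)) (b := 1-r)).exists_isMinOn
    ⟨0, by constructor <;> linarith⟩ hV.smooth.continuous.continuousOn
  set m := V x₀ with hm
  have hmpos : 0 < m := by
    rcases lt_or_eq_of_le (hV.nonneg x₀) with h | h
    · exact h
    · exfalso
      rcases lt_or_eq_of_le hx₀.1 with h0 | h0
      · have := (hV.zero_iff x₀ h0).mp h.symm
        rw [this] at hx₀
        have := hx₀.2; linarith
      · rw [← h0] at h; exact absurd h.symm (ne_of_gt (aux_V0 hV))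
  refine ⟨min (c/4) (4*m), lt_min (by linarith) (by linarith), ?_⟩
  intro δ hδ hδ2 u hu
  have habs : V u = V |u| := by
    rcases abs_choice u with h | h
    · rw [h]
    · rw [h, hV.even]
  rw [habs]
  have habs0 : 0 ≤ |u| := abs_nonneg u
  have hδsq : δ^2 ≤ 1/4 := by nlinarith
  rcases le_or_gt |u| (1-r) with hcase | hcase
  · calc min (c/4) (4*m) * δ^2 ≤ 4*m * (1/4) := by
          have h1 : min (c/4) (4*m) ≤ 4*m := min_le_right _ _
          have h2 : (0:ℝ) ≤ min (c/4) (4*m) := le_of_lt (lt_min (by linarith) (by linarith))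
          nlinarith
      _ = m := by ring
      _ ≤ V |u| := hmin ⟨habs0, hcase⟩
  · have h1 : |u| ∈ Set.Icc (1-r) 1 := ⟨le_of_lt hcase, by linarith [hδ]⟩
    have h2 := hstepB _ h1
    have h3 : δ ≤ 1 - |u| := by linarith [hu]
    have h4 : δ^2 ≤ (1-|u|)^2 := by nlinarith
    calc min (c/4) (4*m) * δ^2 ≤ c/4 * δ^2 := by
          have := min_le_left (c/4) (4*m)
          nlinarith
      _ ≤ c/4 * (1-|u|)^2 := by nlinarith
      _ ≤ V |u| := h2

lemma aux_lip {V : ℝ → ℝ} (hV : Assumption1 V) (R : ℝ) (hR : 0 < R) :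
    ∃ L : ℝ, 0 < L ∧ ∀ u : ℝ, |u - 1| ≤ R → V u ≤ L * |u - 1| := by
  obtain ⟨L₀, hL₀⟩ := (isCompact_Icc (a := 1-R) (b := 1+R)).exists_bound_of_continuousOn
    (aux_smooth_dV hV).continuous.continuousOn
  refine ⟨max L₀ 1, lt_of_lt_of_le one_pos (le_max_right _ _), ?_⟩
  intro u hu
  have hu' : u ∈ Set.Icc (1-R) (1+R) := by
    rw [abs_le] at hu; constructor <;> linarith [hu.1, hu.2]
  have h1 : ‖V u - V 1‖ ≤ (max L₀ 1) * ‖u - 1‖ :=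
    Convex.norm_image_sub_le_of_norm_deriv_le
      (fun x _ => (hV.smooth.differentiable (by simp)) x)
      (fun x hx => le_trans (hL₀ x hx) (le_max_left _ _))
      (convex_Icc _ _) ⟨by linarith [hu'.1], by linarith [hu'.2]⟩ hu'
  rw [aux_V1 hV, sub_zero] at h1
  calc V u ≤ |V u| := le_abs_self _
    _ ≤ (max L₀ 1) * |u - 1| := h1
    _ = (max L₀ 1) * |u - 1| := rfl

lemma aux_int_exp (a b c d : ℝ) (hc : c ≠ 0) :
    ∫ x in a..b, Real.exp (c*x + d) = (Real.exp (c*b+d) - Real.exp (c*a+d))/c := by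
  have h : ∀ x ∈ Set.uIcc a b, HasDerivAt (fun y => Real.exp (c*y+d)/c) (Real.exp (c*x+d)) x := by
    intro x _
    have h1 : HasDerivAt (fun y : ℝ => c*y+d) c x := by
      simpa using ((hasDerivAt_id x).const_mul c).add_const d
    have := (h1.exp).div_const c
    simpa [mul_comm, mul_div_assoc, mul_div_cancel_left₀ _ hc] using this
  have hint : IntervalIntegrable (fun x => Real.exp (c*x+d)) volume a b :=
    (Real.continuous_exp.comp (by continuity)).intervalIntegrable a b
  rw [intervalIntegral.integral_eq_sub_of_hasDerivAt h hint]
  ring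


lemma aux_w_hasDeriv (A B s cst : ℝ) (x : ℝ) :
    HasDerivAt (fun y => cst + A*Real.exp (-y-s) + B*Real.exp (y-s))
      (-(A*Real.exp (-x-s)) + B*Real.exp (x-s)) x := by
  have h1 : HasDerivAt (fun y : ℝ => -y-s) (-1) x := by
    simpa using ((hasDerivAt_id x).neg.sub_const s)
  have h2 : HasDerivAt (fun y : ℝ => y-s) (1:ℝ) x := (hasDerivAt_id x).sub_const s
  have h3 := (h1.exp.const_mul A).const_add cst
  have h4 := h2.exp.const_mul B
  have : HasDerivAt (fun y => cst + A*Real.exp (-y-s) + B*Real.exp (y-s)) _ x := h3.add h4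
  convert this using 1
  ring

lemma aux_w_contDiff (A B s cst : ℝ) :
    ContDiff ℝ 1 (fun y => cst + A*Real.exp (-y-s) + B*Real.exp (y-s)) := by
  have : ContDiff ℝ 1 (fun y : ℝ => -y-s) := by fun_prop
  fun_prop

lemma aux_w_deriv (A B s cst : ℝ) :
    deriv (fun y => cst + A*Real.exp (-y-s) + B*Real.exp (y-s))
      = fun x => -(A*Real.exp (-x-s)) + B*Real.exp (x-s) :=
  funext fun x => (aux_w_hasDeriv A B s cst x).deriv

set_option maxHeartbeats 1000000 in
lemma aux_energy_bound {V : ℝ → ℝ} (hV : Assumption1 V) (s A B R L : ℝ) (hs : 0 < s)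
    (hR : 0 < R) (hA : |A| ≤ R) (hB : |B| ≤ R) (hLpos : 0 < L)
    (hL : ∀ u : ℝ, |u - 1| ≤ 2*R → V u ≤ L * |u - 1|) :
    energy V (-s) s (fun y => 1 + A*Real.exp (-y-s) + B*Real.exp (y-s)) ≤ R^2 + 2*L*R := by
  set w := fun y => 1 + A*Real.exp (-y-s) + B*Real.exp (y-s) with hw
  set f := fun x => (1/2) * (deriv w x)^2 + V (w x) with hf
  set g := fun x => R^2*Real.exp ((-2)*x + (-2*s)) + R^2*Real.exp (2*x + (-2*s))
      + L*R*Real.exp ((-1)*x + (-s)) + L*R*Real.exp (1*x + (-s)) with hg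
  have hfc : Continuous f := by
    rw [hf, aux_w_deriv]
    exact (by fun_prop : Continuous fun x => (1/2) * ((-(A*Real.exp (-x-s)) + B*Real.exp (x-s)))^2).add
      (hV.smooth.continuous.comp (aux_w_contDiff A B s 1).continuous)
  have hfg : ∀ x ∈ Set.Icc (-s) s, f x ≤ g x := by
    intro x hx
    have he1 : Real.exp (-x-s) ≤ 1 := by
      rw [Real.exp_le_one_iff]; linarith [hx.1]
    have he2 : Real.exp (x-s) ≤ 1 := by
      rw [Real.exp_le_one_iff]; linarith [hx.2]
    have he1p := Real.exp_pos (-x-s)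
    have he2p := Real.exp_pos (x-s)
    set e1 := Real.exp (-x-s)
    set e2 := Real.exp (x-s)
    have hd : deriv w x = -(A*e1) + B*e2 := by rw [aux_w_deriv]
    have hsq : (1/2) * (deriv w x)^2 ≤ R^2*(e1^2) + R^2*(e2^2) := by
      rw [hd]
      have h1 : A^2 ≤ R^2 := by nlinarith [abs_nonneg A, sq_abs A, sq_abs R]
      have h2 : B^2 ≤ R^2 := by nlinarith [abs_nonneg B, sq_abs B]
      nlinarith [sq_nonneg (A*e1 + B*e2), sq_nonneg (A*e1 - B*e2), sq_nonneg e1, sq_nonneg e2]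
    have hwd : w x - 1 = A*e1 + B*e2 := by simp [hw]; ring
    have habs : |w x - 1| ≤ R*e1 + R*e2 := by
      rw [hwd]
      have h := abs_add_le (A*e1) (B*e2)
      rw [abs_mul, abs_mul, abs_of_pos he1p, abs_of_pos he2p] at h
      nlinarith
    have hVb : V (w x) ≤ L*(R*e1 + R*e2) := by
      have h2R : |w x - 1| ≤ 2*R := le_trans habs (by nlinarith)
      have h1 := hL _ h2R
      nlinarith [abs_nonneg (w x - 1)]
    have hge : g x = R^2*e1^2 + R^2*e2^2 + L*R*e1 + L*R*e2 := by
      simp only [hg]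
      rw [show (-2)*x + (-2*s) = (-x-s) + (-x-s) by ring,
        show (2:ℝ)*x + (-2*s) = (x-s)+(x-s) by ring,
        show (-1)*x + (-s) = -x-s by ring, show (1:ℝ)*x + (-s) = x-s by ring,
        Real.exp_add, Real.exp_add]
      show _ = R^2*e1^2 + R^2*e2^2 + L*R*e1 + L*R*e2
      ring
    rw [hge]
    simp only [hf]
    nlinarith
  have hgc : Continuous g := by
    rw [hg]; fun_prop
  have i1 : IntervalIntegrable (fun x => R^2*Real.exp ((-2)*x + (-2*s))) volume (-s) s :=
    (by fun_prop : Continuous fun x => R^2*Real.exp ((-2)*x + (-2*s))).intervalIntegrable _ _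
  have i2 : IntervalIntegrable (fun x => R^2*Real.exp (2*x + (-2*s))) volume (-s) s :=
    (by fun_prop : Continuous fun x => R^2*Real.exp (2*x + (-2*s))).intervalIntegrable _ _
  have i3 : IntervalIntegrable (fun x => L*R*Real.exp ((-1)*x + (-s))) volume (-s) s :=
    (by fun_prop : Continuous fun x => L*R*Real.exp ((-1)*x + (-s))).intervalIntegrable _ _
  have i4 : IntervalIntegrable (fun x => L*R*Real.exp (1*x + (-s))) volume (-s) s :=
    (by fun_prop : Continuous fun x => L*R*Real.exp (1*x + (-s))).intervalIntegrable _ _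
  have hmono : energy V (-s) s w ≤ ∫ x in (-s)..s, g x := by
    have : energy V (-s) s w = ∫ x in (-s)..s, f x := rfl
    rw [this]
    exact intervalIntegral.integral_mono_on (by linarith) (hfc.intervalIntegrable _ _)
      (hgc.intervalIntegrable _ _) hfg
  have hgval : ∫ x in (-s)..s, g x
      = R^2*((Real.exp ((-2)*s + (-2*s)) - Real.exp ((-2)*(-s) + (-2*s)))/(-2))
      + R^2*((Real.exp (2*s + (-2*s)) - Real.exp (2*(-s) + (-2*s)))/2)
      + L*R*((Real.exp ((-1)*s + (-s)) - Real.exp ((-1)*(-s) + (-s)))/(-1))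
      + L*R*((Real.exp (1*s + (-s)) - Real.exp (1*(-s) + (-s)))/1) := by
    simp only [hg]
    rw [intervalIntegral.integral_add ((i1.add i2).add i3) i4,
      intervalIntegral.integral_add (i1.add i2) i3,
      intervalIntegral.integral_add i1 i2,
      intervalIntegral.integral_const_mul, intervalIntegral.integral_const_mul,
      intervalIntegral.integral_const_mul, intervalIntegral.integral_const_mul,
      aux_int_exp _ _ _ _ (by norm_num : ((-2):ℝ) ≠ 0),
      aux_int_exp _ _ _ _ (by norm_num : ((2):ℝ) ≠ 0),
      aux_int_exp _ _ _ _ (by norm_num : ((-1):ℝ) ≠ 0),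
      aux_int_exp _ _ _ _ (by norm_num : ((1):ℝ) ≠ 0)]
  have hval_le : (R^2*((Real.exp ((-2)*s + (-2*s)) - Real.exp ((-2)*(-s) + (-2*s)))/(-2))
      + R^2*((Real.exp (2*s + (-2*s)) - Real.exp (2*(-s) + (-2*s)))/2)
      + L*R*((Real.exp ((-1)*s + (-s)) - Real.exp ((-1)*(-s) + (-s)))/(-1))
      + L*R*((Real.exp (1*s + (-s)) - Real.exp (1*(-s) + (-s)))/1)) ≤ R^2 + 2*L*R := by
    have h1 : (-2)*s + (-2*s) = -(4*s) := by ring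
    have h2 : (-2)*(-s) + (-2*s) = 0 := by ring
    have h3 : 2*s + (-2*s) = 0 := by ring
    have h4 : 2*(-s) + (-2*s) = -(4*s) := by ring
    have h5 : (-1)*s + (-s) = -(2*s) := by ring
    have h6 : (-1)*(-s) + (-s) = 0 := by ring
    have h7 : 1*s + (-s) = 0 := by ring
    have h8 : 1*(-s) + (-s) = -(2*s) := by ring
    rw [h1, h2, h3, h4, h5, h6, h7, h8, Real.exp_zero]
    have key : ∀ E4 E2 : ℝ, 0 ≤ E4 → 0 ≤ E2 →
        R^2*((E4 - 1)/(-2)) + R^2*((1 - E4)/2) + L*R*((E2 - 1)/(-1)) + L*R*((1 - E2)/1)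
          ≤ R^2 + 2*L*R := by
      intro E4 E2 he4 he2
      have q1 : 0 ≤ R^2*E4 := by positivity
      have q2 : 0 ≤ L*R*E2 := by positivity
      nlinarith [q1, q2]
    exact key _ _ (Real.exp_pos _).le (Real.exp_pos _).le
  rw [hgval] at hmono
  linarith

set_option maxHeartbeats 1000000 in
/-- Long transitions are expensive (Lemma 2.3): staying in `[−1+δ, 1−δ]` on all of `[−ℓ,ℓ]`
raises the minimal energy on `(−2ℓ, 2ℓ)` by at least `2δ²ℓ/C₁`, uniformly over boundary values
in `[−M, M]`. -/
theorem long_transitions_expensive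
    (V : ℝ → ℝ) (hV : Assumption1 V) :
    ∃ C₁ : ℝ, 0 < C₁ ∧
      ∀ M : ℝ, ∀ δ : ℝ, δ ∈ Set.Ioo (0:ℝ) (1/2) →
        ∃ lstar : ℝ, ∀ ℓ : ℝ, lstar ≤ ℓ →
          ∀ um up : ℝ, um ∈ Set.Icc (-M) M → up ∈ Set.Icc (-M) M →
            2 * δ^2 * ℓ / C₁ ≤
              sInf {e : ℝ | ∃ u : ℝ → ℝ, ContDiff ℝ 1 u ∧
                  u (-(2*ℓ)) = um ∧ u (2*ℓ) = up ∧
                  (∀ x ∈ Set.Icc (-ℓ) ℓ, u x ∈ Set.Icc (-1+δ) (1-δ)) ∧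
                  e = energy V (-(2*ℓ)) (2*ℓ) u} -
              sInf {e : ℝ | ∃ u : ℝ → ℝ, ContDiff ℝ 1 u ∧
                  u (-(2*ℓ)) = um ∧ u (2*ℓ) = up ∧
                  e = energy V (-(2*ℓ)) (2*ℓ) u} := by
  obtain ⟨κ, hκ, hquad⟩ := aux_quad hV
  refine ⟨2/κ, by positivity, ?_⟩
  intro M δ hδ
  obtain ⟨hδ0, hδ2⟩ := hδ
  set R := 4*(|M|+1) with hRdef
  have hR : 0 < R := by positivity
  obtain ⟨L, hL0, hLip⟩ := aux_lip hV (2*R) (by positivity)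
  set K := R^2 + 2*L*R with hKdef
  have hK : 0 < K := by positivity
  refine ⟨max (max 1 (K/(κ*δ^2))) (Real.log (4*R)), ?_⟩
  intro ℓ hℓ um up hum hup
  have hl1 : 1 ≤ ℓ := le_trans (le_trans (le_max_left _ _) (le_max_left _ _)) hℓ
  have hl0 : 0 < ℓ := by linarith
  have hlK : K/(κ*δ^2) ≤ ℓ := le_trans (le_trans (le_max_right _ _) (le_max_left _ _)) hℓ
  have hllog : Real.log (4*R) ≤ ℓ := le_trans (le_max_right _ _) hℓ
  have hKle : K ≤ κ*δ^2*ℓ := by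
    have hpos : 0 < κ*δ^2 := by positivity
    calc K = (K/(κ*δ^2))*(κ*δ^2) := by field_simp
      _ ≤ ℓ*(κ*δ^2) := mul_le_mul_of_nonneg_right hlK (le_of_lt hpos)
      _ = κ*δ^2*ℓ := by ring
  set s := 2*ℓ with hsdef
  have hs : 0 < s := by rw [hsdef]; linarith
  have humM : |um| ≤ |M| :=
    abs_le.mpr ⟨le_trans (neg_le_neg (le_abs_self M)) hum.1, le_trans hum.2 (le_abs_self M)⟩
  have hupM : |up| ≤ |M| :=
    abs_le.mpr ⟨le_trans (neg_le_neg (le_abs_self M)) hup.1, le_trans hup.2 (le_abs_self M)⟩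
  have hexp1 : (2:ℝ) ≤ Real.exp 1 := by have := Real.add_one_le_exp 1; linarith
  have hE : Real.exp (-2*s) ≤ 1/2 := by
    have h1 : Real.exp (-2*s) ≤ Real.exp (-1) := Real.exp_le_exp.mpr (by rw [hsdef]; linarith)
    have h4 := Real.exp_pos 1
    have h5 : (Real.exp 1)⁻¹ * Real.exp 1 = 1 := inv_mul_cancel₀ (ne_of_gt h4)
    have h3 : (Real.exp 1)⁻¹ ≤ 1/2 := by
      rw [inv_eq_one_div, div_le_div_iff₀ h4 (by norm_num)]
      linarith
    rw [Real.exp_neg] at h1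
    linarith
  set E := Real.exp (-2*s) with hEdef
  have hEpos : 0 < E := Real.exp_pos _
  set D := 1 - E^2 with hDdef
  have hD34 : 3/4 ≤ D := by
    have hEE : E*E ≤ (1/2)*(1/2) := mul_le_mul hE hE hEpos.le (by norm_num)
    have hsq : E^2 = E*E := sq E
    rw [hDdef]
    linarith
  have hDpos : 0 < D := by linarith
  have hcoef : ∀ p q : ℝ, |p| ≤ |M|+1 → |q| ≤ |M|+1 → |(p - q*E)/D| ≤ R := by
    intro p q hp hq
    rw [abs_div, abs_of_pos hDpos, div_le_iff₀ hDpos]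
    have h1 : |p - q*E| ≤ |p| + |q| := by
      calc |p - q*E| ≤ |p| + |q*E| := abs_sub _ _
        _ = |p| + |q| *E := by rw [abs_mul, abs_of_pos hEpos]
        _ ≤ |p| + |q| := by
            have := mul_le_mul_of_nonneg_left (le_trans hE (by norm_num : (1:ℝ)/2 ≤ 1)) (abs_nonneg q)
            simpa using by linarith [this]
    have hMnn : 0 ≤ |M| := abs_nonneg M
    calc |p - q*E| ≤ |p| + |q| := h1
      _ ≤ 2*(|M|+1) := by linarith
      _ ≤ (4*(|M|+1))*(3/4) := by linarith
      _ ≤ (4*(|M|+1))*D := mul_le_mul_of_nonneg_left hD34 (by positivity)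
      _ = R*D := by rw [hRdef]
  have hsolve : ∀ p q : ℝ, ((p - q*E)/D) + ((q - p*E)/D)*E = p := by
    intro p q
    calc (p - q*E)/D + ((q - p*E)/D)*E = ((p - q*E) + (q - p*E)*E)/D := by ring
      _ = p*D/D := by rw [hDdef]; ring
      _ = p := by field_simp
  have hnonneg : ∀ u : ℝ → ℝ, 0 ≤ energy V (-s) s u := by
    intro u
    unfold energy
    apply intervalIntegral.integral_nonneg (by linarith)
    intro x _
    exact add_nonneg (by positivity) (hV.nonneg (u x))
  -- unconstrained witness
  set p := um - 1 with hpdef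
  set q := up - 1 with hqdef
  have hpabs : |p| ≤ |M|+1 := by
    calc |p| ≤ |um| + |(1:ℝ)| := abs_sub _ _
      _ ≤ |M| + 1 := by rw [abs_one]; linarith
  have hqabs : |q| ≤ |M|+1 := by
    calc |q| ≤ |up| + |(1:ℝ)| := abs_sub _ _
      _ ≤ |M| + 1 := by rw [abs_one]; linarith
  set A := (p - q*E)/D with hA
  set B := (q - p*E)/D with hB
  have hAabs : |A| ≤ R := hcoef p q hpabs hqabs
  have hBabs : |B| ≤ R := hcoef q p hqabs hpabs
  set w := fun y => 1 + A*Real.exp (-y-s) + B*Real.exp (y-s) with hwdef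
  have hw1 : w (-s) = um := by
    have key := hsolve p q
    rw [← hA, ← hB] at key
    show 1 + A*Real.exp (-(-s)-s) + B*Real.exp (-s-s) = um
    rw [show -(-s) - s = (0:ℝ) by ring, show -s - s = -2*s by ring, Real.exp_zero, ← hEdef]
    rw [hpdef] at key
    linarith
  have hw2 : w s = up := by
    have key := hsolve q p
    rw [← hA, ← hB] at key
    show 1 + A*Real.exp (-s-s) + B*Real.exp (s-s) = up
    rw [show s - s = (0:ℝ) by ring, show -s - s = -2*s by ring, Real.exp_zero, ← hEdef]
    rw [hqdef] at key
    linarith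
  have hSle : sInf {e : ℝ | ∃ u : ℝ → ℝ, ContDiff ℝ 1 u ∧
      u (-s) = um ∧ u s = up ∧ e = energy V (-s) s u} ≤ K := by
    have hmem : energy V (-s) s w ∈ {e : ℝ | ∃ u : ℝ → ℝ, ContDiff ℝ 1 u ∧
        u (-s) = um ∧ u s = up ∧ e = energy V (-s) s u} :=
      ⟨w, aux_w_contDiff A B s 1, hw1, hw2, rfl⟩
    have hbdd : BddBelow {e : ℝ | ∃ u : ℝ → ℝ, ContDiff ℝ 1 u ∧
        u (-s) = um ∧ u s = up ∧ e = energy V (-s) s u} := by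
      refine ⟨0, ?_⟩
      rintro e ⟨u, -, -, -, rfl⟩
      exact hnonneg u
    have h1 := csInf_le hbdd hmem
    have hEb := aux_energy_bound hV s A B R L hs hR hAabs hBabs hL0 hLip
    rw [← hwdef] at hEb
    rw [hKdef]
    linarith
  -- constrained witness
  set A₀ := (um - up*E)/D with hA₀
  set B₀ := (up - um*E)/D with hB₀
  have hA₀abs : |A₀| ≤ R := hcoef um up (by linarith) (by linarith)
  have hB₀abs : |B₀| ≤ R := hcoef up um (by linarith) (by linarith)
  set w₀ := fun y => 0 + A₀*Real.exp (-y-s) + B₀*Real.exp (y-s) with hw₀def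
  have hw₀1 : w₀ (-s) = um := by
    have key := hsolve um up
    rw [← hA₀, ← hB₀] at key
    show 0 + A₀*Real.exp (-(-s)-s) + B₀*Real.exp (-s-s) = um
    rw [show -(-s) - s = (0:ℝ) by ring, show -s - s = -2*s by ring, Real.exp_zero, ← hEdef]
    linarith
  have hw₀2 : w₀ s = up := by
    have key := hsolve up um
    rw [← hA₀, ← hB₀] at key
    show 0 + A₀*Real.exp (-s-s) + B₀*Real.exp (s-s) = up
    rw [show s - s = (0:ℝ) by ring, show -s - s = -2*s by ring, Real.exp_zero, ← hEdef]
    linarith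
  have hw₀con : ∀ x ∈ Set.Icc (-ℓ) ℓ, w₀ x ∈ Set.Icc (-1+δ) (1-δ) := by
    intro x hx
    have he1 : Real.exp (-x-s) ≤ Real.exp (-ℓ) :=
      Real.exp_le_exp.mpr (by rw [hsdef]; linarith [hx.1])
    have he2 : Real.exp (x-s) ≤ Real.exp (-ℓ) :=
      Real.exp_le_exp.mpr (by rw [hsdef]; linarith [hx.2])
    have h4R : (0:ℝ) < 4*R := by positivity
    have hle : 4*R ≤ Real.exp ℓ := by
      rw [← Real.exp_log h4R]; exact Real.exp_le_exp.mpr hllog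
    have hexpl : Real.exp (-ℓ) * (4*R) ≤ 1 := by
      rw [Real.exp_neg]
      have h5 := Real.exp_pos ℓ
      rw [inv_mul_le_iff₀ h5]
      linarith
    have he1p := Real.exp_pos (-x-s)
    have he2p := Real.exp_pos (x-s)
    have help := Real.exp_pos (-ℓ)
    have hb : |w₀ x| ≤ 1/2 := by
      have h1 : |w₀ x| ≤ |A₀| *Real.exp (-x-s) + |B₀| *Real.exp (x-s) := by
        show |0 + A₀*Real.exp (-x-s) + B₀*Real.exp (x-s)| ≤ _
        rw [zero_add]
        calc |A₀*Real.exp (-x-s) + B₀*Real.exp (x-s)|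
            ≤ |A₀*Real.exp (-x-s)| + |B₀*Real.exp (x-s)| := abs_add_le _ _
          _ = |A₀| *Real.exp (-x-s) + |B₀| *Real.exp (x-s) := by
              rw [abs_mul, abs_mul, abs_of_pos he1p, abs_of_pos he2p]
      have h2a : |A₀| * Real.exp (-x-s) ≤ R * Real.exp (-ℓ) :=
        mul_le_mul hA₀abs he1 he1p.le hR.le
      have h2b : |B₀| * Real.exp (x-s) ≤ R * Real.exp (-ℓ) :=
        mul_le_mul hB₀abs he2 he2p.le hR.le
      have h3 : Real.exp (-ℓ) * (4*R) = 4*(R*Real.exp (-ℓ)) := by ring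
      rw [h3] at hexpl
      linarith
    rw [abs_le] at hb
    have hb1 : -(1/2) ≤ w₀ x := hb.1
    have hb2 : w₀ x ≤ 1/2 := hb.2
    constructor
    · calc -1 + δ ≤ -(1/2) := by linarith
        _ ≤ w₀ x := hb1
    · calc w₀ x ≤ 1/2 := hb2
        _ ≤ 1 - δ := by linarith
  have hmem₀ : energy V (-s) s w₀ ∈ {e : ℝ | ∃ u : ℝ → ℝ, ContDiff ℝ 1 u ∧
      u (-s) = um ∧ u s = up ∧
      (∀ x ∈ Set.Icc (-ℓ) ℓ, u x ∈ Set.Icc (-1+δ) (1-δ)) ∧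
      e = energy V (-s) s u} :=
    ⟨w₀, aux_w_contDiff A₀ B₀ s 0, hw₀1, hw₀2, hw₀con, rfl⟩
  have hlow : ∀ e ∈ {e : ℝ | ∃ u : ℝ → ℝ, ContDiff ℝ 1 u ∧
      u (-s) = um ∧ u s = up ∧
      (∀ x ∈ Set.Icc (-ℓ) ℓ, u x ∈ Set.Icc (-1+δ) (1-δ)) ∧
      e = energy V (-s) s u}, κ*δ^2*(2*ℓ) ≤ e := by
    rintro e ⟨u, hu, -, -, hcon, rfl⟩
    have hdc : Continuous (deriv u) := hu.continuous_deriv le_rfl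
    have hcont : Continuous (fun x => (1/2) * (deriv u x)^2 + V (u x)) :=
      ((continuous_const.mul (hdc.pow 2)).add (hV.smooth.continuous.comp hu.continuous))
    have hii : ∀ a b : ℝ, IntervalIntegrable (fun x => (1/2) * (deriv u x)^2 + V (u x)) volume a b :=
      fun a b => hcont.intervalIntegrable a b
    have hsplit2 := intervalIntegral.integral_add_adjacent_intervals
      (a := -ℓ) (b := ℓ) (c := s) (hii _ _) (hii _ _)
    have hsplit1 := intervalIntegral.integral_add_adjacent_intervals
      (a := -s) (b := -ℓ) (c := s) (hii _ _) (hii _ _)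
    have hnn : ∀ x : ℝ, 0 ≤ (1/2) * (deriv u x)^2 + V (u x) :=
      fun x => add_nonneg (by positivity) (hV.nonneg (u x))
    have h1 : 0 ≤ ∫ x in (-s)..(-ℓ), ((1/2) * (deriv u x)^2 + V (u x)) :=
      intervalIntegral.integral_nonneg (by rw [hsdef]; linarith) (fun x _ => hnn x)
    have h3 : 0 ≤ ∫ x in ℓ..s, ((1/2) * (deriv u x)^2 + V (u x)) :=
      intervalIntegral.integral_nonneg (by rw [hsdef]; linarith) (fun x _ => hnn x)
    have h2 : κ*δ^2*(2*ℓ) ≤ ∫ x in (-ℓ)..ℓ, ((1/2) * (deriv u x)^2 + V (u x)) := by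
      have hmono := intervalIntegral.integral_mono_on (a := -ℓ) (b := ℓ)
        (μ := volume) (f := fun _ => κ*δ^2)
        (g := fun x => (1/2) * (deriv u x)^2 + V (u x))
        (by linarith) (continuous_const.intervalIntegrable _ _) (hii _ _)
        (fun x hx => by
          have hux := hcon x hx
          have habs : |u x| ≤ 1 - δ := abs_le.mpr ⟨by linarith [hux.1], hux.2⟩
          have := hquad δ hδ0 hδ2 (u x) habs
          have hsq := sq_nonneg (deriv u x)
          linarith)
      rw [intervalIntegral.integral_const, smul_eq_mul] at hmono
      calc κ*δ^2*(2*ℓ) = (ℓ - -ℓ) * (κ*δ^2) := by ring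
        _ ≤ _ := hmono
    unfold energy
    linarith
  have hS0 : κ*δ^2*(2*ℓ) ≤ sInf {e : ℝ | ∃ u : ℝ → ℝ, ContDiff ℝ 1 u ∧
      u (-s) = um ∧ u s = up ∧
      (∀ x ∈ Set.Icc (-ℓ) ℓ, u x ∈ Set.Icc (-1+δ) (1-δ)) ∧
      e = energy V (-s) s u} :=
    le_csInf ⟨_, hmem₀⟩ hlow
  have harith : 2*δ^2*ℓ/(2/κ) = κ*δ^2*ℓ := by
    field_simp
  rw [harith]
  linarith
end

section
/- Upper bound for the cost of a wasted δ⁺ excursion (Lemma 2.7): Assume V satisfies Assumption 1. There exists C < ∞ such that for every M < ∞ and δ ∈ (0, 1/2) there exists ℓ* < ∞ with the following property. For every ℓ ≥ ℓ* and all u₋, u₊ ∈ [−M, 0], let A^bc be the set of continuously differentiable u : ℝ → ℝ with u(−2ℓ) = u₋ and u(2ℓ) = u₊, and let A_{δ,pre}^bc be the set of u ∈ A^bc for which there exist points −ℓ ≤ x₋ < x₀ < x₊ ≤ ℓ with u(x₋) ≤ −1−2δ, u(x₊) ≤ −1−2δ and u(x₀) ≥ δ. Then inf_{u ∈ A_{δ,pre}^bc}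 E_{(−2ℓ,2ℓ)}(u) − inf_{u ∈ A^bc} E_{(−2ℓ,2ℓ)}(u) ≤ c₀ + C·δ. -/
open MeasureTheory

/-- The transition energy `c₀ = ∫_{-1}^{1} √(2 V(s)) ds`. -/
noncomputable def c0 (V : ℝ → ℝ) : ℝ := ∫ s in (-1:ℝ)..1, Real.sqrt (2 * V s)



open MeasureTheory intervalIntegral Set

namespace Wasted

noncomputable def Gf (V : ℝ → ℝ) : ℝ → ℝ := fun t => ∫ s in (0:ℝ)..t, Real.sqrt (2 * V s)

variable {V : ℝ → ℝ}

lemma sqrt2V_cont (hVc : Continuous V) : Continuous (fun s => Real.sqrt (2 * V s)) :=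
  (continuous_const.mul hVc).sqrt

lemma integrand_cont (hVc : Continuous V) {u : ℝ → ℝ} (hu : ContDiff ℝ 1 u) :
    Continuous (fun x => (1/2) * (deriv u x)^2 + V (u x)) :=
  (continuous_const.mul ((hu.continuous_deriv le_rfl).pow 2)).add (hVc.comp hu.continuous)

lemma energy_nonneg (hVn : ∀ t, 0 ≤ V t) {a b : ℝ} (hab : a ≤ b) (u : ℝ → ℝ) :
    0 ≤ energy V a b u := by
  apply intervalIntegral.integral_nonneg hab
  intro x _
  have := hVn (u x)
  positivity

lemma energy_split (hVc : Continuous V) {u : ℝ → ℝ} (hu : ContDiff ℝ 1 u) (a c b : ℝ) :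
    energy V a c u + energy V c b u = energy V a b u := by
  unfold energy
  exact intervalIntegral.integral_add_adjacent_intervals
    ((integrand_cont hVc hu).intervalIntegrable _ _) ((integrand_cont hVc hu).intervalIntegrable _ _)

lemma hasDerivAt_Gf (hVc : Continuous V) (t : ℝ) :
    HasDerivAt (Gf V) (Real.sqrt (2 * V t)) t :=
  intervalIntegral.integral_hasDerivAt_right ((sqrt2V_cont hVc).intervalIntegrable _ _)
    ((sqrt2V_cont hVc).stronglyMeasurableAtFilter volume _)
    (sqrt2V_cont hVc).continuousAt

lemma Gf_sub (hVc : Continuous V) (a b : ℝ) :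
    Gf V b - Gf V a = ∫ s in a..b, Real.sqrt (2 * V s) := by
  have h := intervalIntegral.integral_add_adjacent_intervals (μ := volume) (a := 0) (b := a) (c := b)
    ((sqrt2V_cont hVc).intervalIntegrable _ _) ((sqrt2V_cont hVc).intervalIntegrable _ _)
  unfold Gf
  linarith [h]

lemma Gf_mono (hVc : Continuous V) {a b : ℝ} (hab : a ≤ b) : Gf V a ≤ Gf V b := by
  have h := Gf_sub hVc a b
  have : 0 ≤ ∫ s in a..b, Real.sqrt (2 * V s) :=
    intervalIntegral.integral_nonneg hab (fun x _ => Real.sqrt_nonneg _)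
  linarith

lemma Gf_lip (hVc : Continuous V) {K R : ℝ} (hK : ∀ s ∈ Icc (-R) R, Real.sqrt (2 * V s) ≤ K)
    {s t : ℝ} (hs : s ∈ Icc (-R) R) (ht : t ∈ Icc (-R) R) :
    |Gf V t - Gf V s| ≤ K * |t - s| := by
  rw [Gf_sub hVc]
  have := intervalIntegral.norm_integral_le_of_norm_le_const (a := s) (b := t)
    (C := K) (f := fun s => Real.sqrt (2 * V s)) ?_
  · rw [Real.norm_eq_abs] at this
    calc |∫ x in s..t, Real.sqrt (2 * V x)| ≤ K * |t - s| := this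
      _ = K * |t - s| := rfl
  · intro x hx
    have hx' : x ∈ Icc (-R) R := by
      rcases le_total s t with h | h
      · have := Set.uIoc_of_le h ▸ hx
        exact ⟨le_trans hs.1 (le_of_lt this.1), le_trans this.2 ht.2⟩
      · have := Set.uIoc_of_ge h ▸ hx
        exact ⟨le_trans ht.1 (le_of_lt this.1), le_trans this.2 hs.2⟩
    simpa [Real.norm_eq_abs, abs_of_nonneg (Real.sqrt_nonneg _)] using hK x hx'

lemma abs_Gf_sub_le_energy (hVc : Continuous V) (hVn : ∀ t, 0 ≤ V t)
    {u : ℝ → ℝ} (hu : ContDiff ℝ 1 u) {a b : ℝ} (hab : a ≤ b) :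
    |Gf V (u b) - Gf V (u a)| ≤ energy V a b u := by
  have hd : Continuous (deriv u) := hu.continuous_deriv le_rfl
  have hc : Continuous (fun x => Real.sqrt (2 * V (u x)) * deriv u x) :=
    ((sqrt2V_cont hVc).comp hu.continuous).mul hd
  have key : Gf V (u b) - Gf V (u a) = ∫ x in a..b, Real.sqrt (2 * V (u x)) * deriv u x := by
    refine (intervalIntegral.integral_eq_sub_of_hasDerivAt (f := fun y => Gf V (u y)) ?_
      (hc.intervalIntegrable _ _)).symm
    intro x _
    exact (hasDerivAt_Gf hVc (u x)).comp x (hu.differentiable one_ne_zero x).hasDerivAt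
  rw [key]
  calc |∫ x in a..b, Real.sqrt (2 * V (u x)) * deriv u x|
      ≤ ∫ x in a..b, |Real.sqrt (2 * V (u x)) * deriv u x| :=
        intervalIntegral.abs_integral_le_integral_abs hab
    _ ≤ energy V a b u := by
        apply intervalIntegral.integral_mono_on hab (hc.abs.intervalIntegrable _ _)
          ((integrand_cont hVc hu).intervalIntegrable _ _)
        intro x _
        have h2 : 0 ≤ 2 * V (u x) := by linarith [hVn (u x)]
        have hs2 : Real.sqrt (2 * V (u x)) ^ 2 = 2 * V (u x) := Real.sq_sqrt h2
        rw [abs_mul, abs_of_nonneg (Real.sqrt_nonneg _)]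
        nlinarith [sq_nonneg (Real.sqrt (2 * V (u x)) - |deriv u x|), sq_abs (deriv u x),
          abs_nonneg (deriv u x), Real.sqrt_nonneg (2 * V (u x))]






/-- If a `C¹` function is constant on `Iic c`, its derivative vanishes on `Iic c`. -/
lemma deriv_zero_of_const_Iic {u : ℝ → ℝ} (hu : ContDiff ℝ 1 u) {a c : ℝ}
    (h : ∀ x ≤ c, u x = a) : ∀ x ≤ c, deriv u x = 0 := by
  have hlt : ∀ x < c, deriv u x = 0 := by
    intro x hx
    have : u =ᶠ[nhds x] (fun _ => a) :=
      Filter.eventuallyEq_of_mem (Iio_mem_nhds hx) (fun y hy => h y (le_of_lt hy))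
    rw [this.deriv_eq, deriv_const]
  intro x hx
  rcases lt_or_eq_of_le hx with h' | h'
  · exact hlt x h'
  · subst h'
    have hcont : ContinuousAt (deriv u) x := (hu.continuous_deriv le_rfl).continuousAt
    have h1 : Filter.Tendsto (deriv u) (nhdsWithin x (Set.Iio x)) (nhds (deriv u x)) :=
      hcont.continuousWithinAt.tendsto
    have h2 : Filter.Tendsto (deriv u) (nhdsWithin x (Set.Iio x)) (nhds 0) := by
      refine Filter.Tendsto.congr' ?_ tendsto_const_nhds
      exact Filter.eventually_of_mem self_mem_nhdsWithin (fun y hy => (hlt y hy).symm)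
    exact tendsto_nhds_unique h1 h2

lemma deriv_zero_of_const_Ici {u : ℝ → ℝ} (hu : ContDiff ℝ 1 u) {a c : ℝ}
    (h : ∀ x, c ≤ x → u x = a) : ∀ x, c ≤ x → deriv u x = 0 := by
  have hlt : ∀ x, c < x → deriv u x = 0 := by
    intro x hx
    have : u =ᶠ[nhds x] (fun _ => a) :=
      Filter.eventuallyEq_of_mem (Ioi_mem_nhds hx) (fun y hy => h y (le_of_lt hy))
    rw [this.deriv_eq, deriv_const]
  intro x hx
  rcases lt_or_eq_of_le hx with h' | h'
  · exact hlt x h'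
  · subst h'
    have hcont : ContinuousAt (deriv u) c := (hu.continuous_deriv le_rfl).continuousAt
    have h1 : Filter.Tendsto (deriv u) (nhdsWithin c (Set.Ioi c)) (nhds (deriv u c)) :=
      hcont.continuousWithinAt.tendsto
    have h2 : Filter.Tendsto (deriv u) (nhdsWithin c (Set.Ioi c)) (nhds 0) := by
      refine Filter.Tendsto.congr' ?_ tendsto_const_nhds
      exact Filter.eventually_of_mem self_mem_nhdsWithin (fun y hy => (hlt y hy).symm)
    exact tendsto_nhds_unique h1 h2

/-- A profile from `a` to `b` of length `L` with energy at most `e`. -/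
def IsProf (V : ℝ → ℝ) (u : ℝ → ℝ) (a b L e : ℝ) : Prop :=
  0 ≤ L ∧ ContDiff ℝ 1 u ∧ (∀ x ≤ (0:ℝ), u x = a) ∧ (∀ x, L ≤ x → u x = b) ∧
    energy V 0 L u ≤ e

noncomputable def glueFun (b L1 : ℝ) (u1 u2 : ℝ → ℝ) : ℝ → ℝ :=
  fun x => u1 x + u2 (x - L1) - b

lemma glueFun_eval_right {b L1 : ℝ} {u1 u2 : ℝ → ℝ} (h1 : ∀ x, L1 ≤ x → u1 x = b)
    {t : ℝ} (ht : 0 ≤ t) : glueFun b L1 u1 u2 (L1 + t) = u2 t := by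
  have h0 : glueFun b L1 u1 u2 (L1 + t) = u1 (L1+t) + u2 (L1 + t - L1) - b := rfl
  rw [h0, h1 _ (by linarith)]
  have h3 : L1 + t - L1 = t := by ring
  rw [h3]; ring

lemma IsProf.glue {u1 u2 : ℝ → ℝ} {a b c L1 L2 e1 e2 : ℝ}
    (hVc : Continuous V)
    (h1 : IsProf V u1 a b L1 e1) (h2 : IsProf V u2 b c L2 e2) :
    IsProf V (glueFun b L1 u1 u2) a c (L1 + L2) (e1 + e2) := by
  obtain ⟨hL1, hu1, hl1, hr1, he1⟩ := h1
  obtain ⟨hL2, hu2, hl2, hr2, he2⟩ := h2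
  have hcd : ContDiff ℝ 1 (glueFun b L1 u1 u2) := by
    unfold glueFun
    exact (hu1.add (hu2.comp (contDiff_id.sub contDiff_const))).sub contDiff_const
  have hderiv : ∀ x, deriv (glueFun b L1 u1 u2) x = deriv u1 x + deriv u2 (x - L1) := by
    intro x
    unfold glueFun
    have d1 : HasDerivAt u1 (deriv u1 x) x := (hu1.differentiable one_ne_zero x).hasDerivAt
    have d2 : HasDerivAt (fun y => u2 (y - L1)) (deriv u2 (x - L1)) x :=
      HasDerivAt.comp_sub_const x L1 ((hu2.differentiable one_ne_zero _).hasDerivAt)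
    exact ((d1.add d2).sub_const b).deriv
  refine ⟨by linarith, hcd, ?_, ?_, ?_⟩
  · intro x hx
    show u1 x + u2 (x - L1) - b = a
    rw [hl1 x hx, hl2 (x - L1) (by linarith)]
    ring
  · intro x hx
    show u1 x + u2 (x - L1) - b = c
    rw [hr1 x (by linarith), hr2 (x - L1) (by linarith)]
    ring
  · have hsplit := energy_split hVc hcd 0 L1 (L1 + L2)
    have hE1 : energy V 0 L1 (glueFun b L1 u1 u2) = energy V 0 L1 u1 := by
      unfold energy
      apply intervalIntegral.integral_congr
      intro x hx
      rw [Set.uIcc_of_le hL1] at hx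
      have hx1 : x - L1 ≤ 0 := by linarith [hx.2]
      have hval : glueFun b L1 u1 u2 x = u1 x := by
        show u1 x + u2 (x - L1) - b = u1 x; rw [hl2 _ hx1]; ring
      have hder : deriv (glueFun b L1 u1 u2) x = deriv u1 x := by
        rw [hderiv x, deriv_zero_of_const_Iic hu2 hl2 _ hx1, add_zero]
      dsimp only
      rw [hval, hder]
    have hE2 : energy V L1 (L1 + L2) (glueFun b L1 u1 u2) = energy V 0 L2 u2 := by
      unfold energy
      have hcongr : (∫ x in L1..(L1+L2), ((1/2) * (deriv (glueFun b L1 u1 u2) x)^2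
          + V (glueFun b L1 u1 u2 x)))
          = ∫ x in L1..(L1+L2), ((1/2) * (deriv u2 (x - L1))^2 + V (u2 (x - L1))) := by
        apply intervalIntegral.integral_congr
        intro x hx
        rw [Set.uIcc_of_le (by linarith)] at hx
        have hx1 : L1 ≤ x := hx.1
        have hval : glueFun b L1 u1 u2 x = u2 (x - L1) := by
          unfold glueFun; rw [hr1 _ hx1]; ring
        have hder : deriv (glueFun b L1 u1 u2) x = deriv u2 (x - L1) := by
          rw [hderiv x, deriv_zero_of_const_Ici hu1 hr1 _ hx1, zero_add]
        dsimp only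
        rw [hval, hder]
      rw [hcongr]
      rw [intervalIntegral.integral_comp_sub_right (fun y => (1/2) * (deriv u2 y)^2 + V (u2 y)) L1]
      norm_num
    linarith

lemma IsProf.const (hVc : Continuous V) {a L : ℝ} (hL : 0 ≤ L) (ha : V a = 0) :
    IsProf V (fun _ => a) a a L 0 := by
  refine ⟨hL, contDiff_const, fun _ _ => rfl, fun _ _ => rfl, ?_⟩
  unfold energy
  have : ∀ x, (1/2) * (deriv (fun _ : ℝ => a) x)^2 + V ((fun _ : ℝ => a) x) = 0 := by
    intro x; simp [ha]
  simp only [this]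
  simp

lemma IsProf.reverse {u : ℝ → ℝ} {a b L e : ℝ} (h : IsProf V u a b L e) :
    IsProf V (fun x => u (L - x)) b a L e := by
  obtain ⟨hL, hu, hl, hr, he⟩ := h
  have hcd : ContDiff ℝ 1 (fun x => u (L - x)) := hu.comp (contDiff_const.sub contDiff_id)
  refine ⟨hL, hcd, ?_, ?_, ?_⟩
  · intro x hx; exact hr (L - x) (by linarith)
  · intro x hx; exact hl (L - x) (by linarith)
  · have hder : ∀ x : ℝ, deriv (fun y => u (L - y)) x = -deriv u (L - x) := fun x =>
      deriv_comp_const_sub u L x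
    have hcongr : energy V 0 L (fun x => u (L - x))
        = ∫ x in (0:ℝ)..L, ((1/2) * (deriv u (L - x))^2 + V (u (L - x))) := by
      unfold energy
      apply intervalIntegral.integral_congr
      intro x _
      dsimp only
      rw [hder x]
      ring_nf
    calc energy V 0 L (fun x => u (L - x))
        = ∫ x in (0:ℝ)..L, ((1/2) * (deriv u (L - x))^2 + V (u (L - x))) := hcongr
      _ = ∫ x in (L - L)..(L - 0), ((1/2) * (deriv u x)^2 + V (u x)) :=
          intervalIntegral.integral_comp_sub_left (fun y => (1/2) * (deriv u y)^2 + V (u y)) L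
      _ = energy V 0 L u := by rw [sub_self, sub_zero]; rfl
      _ ≤ e := he





noncomputable def trap (ρ t : ℝ) : ℝ := max 0 (min 1 (min (t/ρ) ((1-t)/ρ)))

lemma trap_cont (ρ : ℝ) : Continuous (trap ρ) := by
  unfold trap
  exact continuous_const.max (continuous_const.min ((continuous_id.div_const ρ).min
    ((continuous_const.sub continuous_id).div_const ρ)))

lemma trap_nonneg (ρ t : ℝ) : 0 ≤ trap ρ t := le_max_left _ _

lemma trap_le_one (ρ t : ℝ) : trap ρ t ≤ 1 :=
  max_le zero_le_one (min_le_left _ _)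

lemma trap_zero_left {ρ t : ℝ} (hρ : 0 < ρ) (ht : t ≤ 0) : trap ρ t = 0 := by
  unfold trap
  have h1 : t/ρ ≤ 0 := div_nonpos_of_nonpos_of_nonneg ht hρ.le
  have : min 1 (min (t/ρ) ((1-t)/ρ)) ≤ 0 :=
    le_trans (min_le_right _ _) (le_trans (min_le_left _ _) h1)
  exact max_eq_left this

lemma trap_zero_right {ρ t : ℝ} (hρ : 0 < ρ) (ht : 1 ≤ t) : trap ρ t = 0 := by
  unfold trap
  have h1 : (1-t)/ρ ≤ 0 := div_nonpos_of_nonpos_of_nonneg (by linarith) hρ.le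
  have : min 1 (min (t/ρ) ((1-t)/ρ)) ≤ 0 :=
    le_trans (min_le_right _ _) (le_trans (min_le_right _ _) h1)
  exact max_eq_left this

lemma trap_one {ρ t : ℝ} (hρ : 0 < ρ) (h1 : ρ ≤ t) (h2 : t ≤ 1 - ρ) : trap ρ t = 1 := by
  unfold trap
  have ha : (1:ℝ) ≤ t/ρ := (le_div_iff₀ hρ).2 (by linarith)
  have hb : (1:ℝ) ≤ (1-t)/ρ := (le_div_iff₀ hρ).2 (by linarith)
  rw [min_eq_left (le_min ha hb), max_eq_right zero_le_one]

noncomputable def trapI (ρ : ℝ) : ℝ := ∫ t in (0:ℝ)..1, trap ρ t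

lemma trapI_le_one (ρ : ℝ) : trapI ρ ≤ 1 := by
  have h : trapI ρ ≤ ∫ _t in (0:ℝ)..1, (1:ℝ) := by
    apply intervalIntegral.integral_mono_on zero_le_one
      ((trap_cont ρ).intervalIntegrable _ _) (intervalIntegrable_const)
    exact fun x _ => trap_le_one ρ x
  simpa using h

lemma trapI_ge {ρ : ℝ} (hρ : 0 < ρ) (hρ8 : ρ ≤ 1/8) : 1 - 2*ρ ≤ trapI ρ := by
  have hint : ∀ a b : ℝ, IntervalIntegrable (trap ρ) MeasureTheory.volume a b :=
    fun a b => (trap_cont ρ).intervalIntegrable a b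
  have hsplit1 := intervalIntegral.integral_add_adjacent_intervals
    (μ := MeasureTheory.volume) (a := 0) (b := ρ) (c := 1-ρ) (hint 0 ρ) (hint ρ (1-ρ))
  have hsplit2 := intervalIntegral.integral_add_adjacent_intervals
    (μ := MeasureTheory.volume) (a := 0) (b := 1-ρ) (c := 1) (hint 0 (1-ρ)) (hint (1-ρ) 1)
  have h1 : 0 ≤ ∫ t in (0:ℝ)..ρ, trap ρ t :=
    intervalIntegral.integral_nonneg hρ.le (fun x _ => trap_nonneg ρ x)
  have h3 : 0 ≤ ∫ t in (1-ρ:ℝ)..1, trap ρ t :=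
    intervalIntegral.integral_nonneg (by linarith) (fun x _ => trap_nonneg ρ x)
  have h2 : (∫ t in (ρ:ℝ)..(1-ρ), trap ρ t) = 1 - 2*ρ := by
    have hc : (∫ t in (ρ:ℝ)..(1-ρ), trap ρ t) = ∫ _t in (ρ:ℝ)..(1-ρ), (1:ℝ) := by
      apply intervalIntegral.integral_congr
      intro x hx
      rw [Set.uIcc_of_le (by linarith)] at hx
      exact trap_one hρ hx.1 hx.2
    rw [hc]
    simp
    ring
  unfold trapI
  rw [← hsplit2, ← hsplit1, h2]
  linarith

lemma trapI_pos {ρ : ℝ} (hρ : 0 < ρ) (hρ8 : ρ ≤ 1/8) : 0 < trapI ρ := by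
  have := trapI_ge hρ hρ8
  linarith

noncomputable def Sfun (ρ y : ℝ) : ℝ := (∫ t in (0:ℝ)..y, trap ρ t) / trapI ρ

lemma hasDerivAt_Sfun (ρ y : ℝ) : HasDerivAt (Sfun ρ) (trap ρ y / trapI ρ) y := by
  have h : HasDerivAt (fun z => ∫ t in (0:ℝ)..z, trap ρ t) (trap ρ y) y :=
    intervalIntegral.integral_hasDerivAt_right ((trap_cont ρ).intervalIntegrable _ _)
      ((trap_cont ρ).stronglyMeasurableAtFilter MeasureTheory.volume _)
      (trap_cont ρ).continuousAt
  exact h.div_const _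

lemma Sfun_nonpos {ρ y : ℝ} (hρ : 0 < ρ) (hy : y ≤ 0) : Sfun ρ y = 0 := by
  unfold Sfun
  have h : (∫ t in (0:ℝ)..y, trap ρ t) = 0 := by
    rw [intervalIntegral.integral_symm]
    have : (∫ t in (y:ℝ)..0, trap ρ t) = ∫ _t in (y:ℝ)..0, (0:ℝ) := by
      apply intervalIntegral.integral_congr
      intro x hx
      rw [Set.uIcc_of_le hy] at hx
      exact trap_zero_left hρ hx.2
    rw [this]; simp
  rw [h]; simp

lemma Sfun_ge_one {ρ y : ℝ} (hρ : 0 < ρ) (hρ8 : ρ ≤ 1/8) (hy : 1 ≤ y) : Sfun ρ y = 1 := by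
  unfold Sfun
  have hint : ∀ a b : ℝ, IntervalIntegrable (trap ρ) MeasureTheory.volume a b :=
    fun a b => (trap_cont ρ).intervalIntegrable a b
  have hsplit := intervalIntegral.integral_add_adjacent_intervals
    (μ := MeasureTheory.volume) (a := 0) (b := 1) (c := y) (hint 0 1) (hint 1 y)
  have h2 : (∫ t in (1:ℝ)..y, trap ρ t) = 0 := by
    have : (∫ t in (1:ℝ)..y, trap ρ t) = ∫ _t in (1:ℝ)..y, (0:ℝ) := by
      apply intervalIntegral.integral_congr
      intro x hx
      rw [Set.uIcc_of_le hy] at hx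
      exact trap_zero_right hρ hx.1
    rw [this]; simp
  have h3 : (∫ t in (0:ℝ)..y, trap ρ t) = trapI ρ := by
    unfold trapI; rw [← hsplit, h2]; ring
  rw [h3, div_self (trapI_pos hρ hρ8).ne']

lemma Sfun_mono {ρ : ℝ} (hρ : 0 < ρ) (hρ8 : ρ ≤ 1/8) : Monotone (Sfun ρ) := by
  intro y1 y2 h
  unfold Sfun
  have hint : ∀ a b : ℝ, IntervalIntegrable (trap ρ) MeasureTheory.volume a b :=
    fun a b => (trap_cont ρ).intervalIntegrable a b
  have hsplit := intervalIntegral.integral_add_adjacent_intervals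
    (μ := MeasureTheory.volume) (a := 0) (b := y1) (c := y2) (hint 0 y1) (hint y1 y2)
  have hpos : 0 ≤ ∫ t in y1..y2, trap ρ t :=
    intervalIntegral.integral_nonneg h (fun x _ => trap_nonneg ρ x)
  have hle : (∫ t in (0:ℝ)..y1, trap ρ t) ≤ ∫ t in (0:ℝ)..y2, trap ρ t := by linarith
  exact (div_le_div_iff_of_pos_right (trapI_pos hρ hρ8)).2 hle


lemma Sfun_mem {ρ y : ℝ} (hρ : 0 < ρ) (hρ8 : ρ ≤ 1/8) : 0 ≤ Sfun ρ y ∧ Sfun ρ y ≤ 1 := by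
  constructor
  · have h := Sfun_mono hρ hρ8 (min_le_right (min y 0) y |>.trans_eq rfl : min (min y 0) y ≤ y)
    have h0 : Sfun ρ (min (min y 0) y) = 0 :=
      Sfun_nonpos hρ (le_trans (min_le_left _ _) (min_le_right _ _))
    linarith
  · have h := Sfun_mono hρ hρ8 (le_max_left y 1)
    have h1 : Sfun ρ (max y 1) = 1 := Sfun_ge_one hρ hρ8 (le_max_right _ _)
    linarith


set_option maxHeartbeats 1000000 in
lemma atom (hVc : Continuous V) (hVn : ∀ t, 0 ≤ V t) {ρ a b W c : ℝ}
    (hρ : 0 < ρ) (hρ8 : ρ ≤ 1/8) (hab : a < b) (hWpos : 0 < W) (hc0 : 0 ≤ c)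
    (hW : ∀ v ∈ Set.Icc a b, V v ≤ W)
    (hcomp : ∀ s ∈ Set.Icc a b, Real.sqrt (2*W) * (1 + 2*ρ) ≤ Real.sqrt (2 * V s) + c) :
    ∃ L u, IsProf V u a b L ((∫ s in a..b, Real.sqrt (2 * V s)) + c * (b - a)) ∧
      L = (b - a) / Real.sqrt (2*W) := by
  set w := b - a with hwdef
  have hw : 0 < w := by simp [hwdef]; linarith
  set sW := Real.sqrt (2*W) with hsWdef
  have hsW : 0 < sW := Real.sqrt_pos.2 (by linarith)
  have hsW2 : sW^2 = 2*W := Real.sq_sqrt (by linarith)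
  set L := w / sW with hLdef0
  have hL : 0 < L := div_pos hw hsW
  have hLdef : L * sW = w := div_mul_cancel₀ w hsW.ne'
  set I := trapI ρ with hIdef
  have hI : 0 < I := trapI_pos hρ hρ8
  have hIge : 1 - 2*ρ ≤ I := trapI_ge hρ hρ8
  set u := fun x => a + w * Sfun ρ (x / L) with hudef
  refine ⟨L, u, ?_, rfl⟩
  have hder : ∀ x, HasDerivAt u (w * (trap ρ (x/L) / I) * (1/L)) x := by
    intro x
    have hinner : HasDerivAt (fun y : ℝ => y / L) (1/L) x := by
      simpa using (hasDerivAt_id x).div_const L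
    have h1 : HasDerivAt (fun y => Sfun ρ (y / L)) (trap ρ (x/L) / I * (1/L)) x :=
      by have := (hasDerivAt_Sfun ρ (x/L)).comp x hinner; exact this
    have h2 := (h1.const_mul w).const_add a
    simpa [mul_assoc, hudef] using h2
  have hderiv_eq : deriv u = fun x => w * (trap ρ (x/L) / I) * (1/L) :=
    funext fun x => (hder x).deriv
  have hcd : ContDiff ℝ 1 u := by
    rw [contDiff_one_iff_deriv]
    refine ⟨fun x => (hder x).differentiableAt, ?_⟩
    rw [hderiv_eq]
    exact (continuous_const.mul (((trap_cont ρ).comp (continuous_id.div_const L)).div_const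
      I)).mul continuous_const
  have hS : ∀ y : ℝ, 0 ≤ Sfun ρ y ∧ Sfun ρ y ≤ 1 := fun y => Sfun_mem hρ hρ8
  have hrange : ∀ x : ℝ, u x ∈ Set.Icc a b := by
    intro x
    have := hS (x / L)
    constructor
    · simp only [hudef]; nlinarith [this.1]
    · simp only [hudef]; nlinarith [this.2]
  refine ⟨hL.le, hcd, ?_, ?_, ?_⟩
  · intro x hx
    have : x / L ≤ 0 := div_nonpos_of_nonpos_of_nonneg hx hL.le
    simp [hudef, Sfun_nonpos hρ this]
  · intro x hx
    have : (1:ℝ) ≤ x / L := (le_div_iff₀ hL).2 (by linarith)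
    simp [hudef, Sfun_ge_one hρ hρ8 this, hwdef]
  · -- energy bound
    have hcont1 : Continuous (fun x => (1/2)*(w/(I*L))^2 * trap ρ (x/L) + W) :=
      (continuous_const.mul ((trap_cont ρ).comp (continuous_id.div_const L))).add
        continuous_const
    have hmono : energy V 0 L u ≤ ∫ x in (0:ℝ)..L, ((1/2)*(w/(I*L))^2 * trap ρ (x/L) + W) := by
      apply intervalIntegral.integral_mono_on hL.le
        ((integrand_cont hVc hcd).intervalIntegrable _ _) (hcont1.intervalIntegrable _ _)
      intro x _
      have hd : deriv u x = w * (trap ρ (x/L) / I) * (1/L) := by rw [hderiv_eq]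
      have htr := trap_nonneg ρ (x/L)
      have htr1 := trap_le_one ρ (x/L)
      have hVu : V (u x) ≤ W := hW _ (hrange x)
      have hsq : (deriv u x)^2 ≤ (w/(I*L))^2 * trap ρ (x/L) := by
        rw [hd]
        have : (w * (trap ρ (x/L) / I) * (1/L))^2 = (w/(I*L))^2 * (trap ρ (x/L))^2 := by
          field_simp
        rw [this]
        have h1 : (trap ρ (x/L))^2 ≤ trap ρ (x/L) := by nlinarith
        have h2 : (0:ℝ) ≤ (w/(I*L))^2 := sq_nonneg _
        nlinarith
      nlinarith
    have hinttrap : (∫ x in (0:ℝ)..L, trap ρ (x/L)) = L * I := by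
      rw [intervalIntegral.integral_comp_div (f := trap ρ) (c := L) hL.ne']
      rw [zero_div, div_self hL.ne']
      simp [hIdef, trapI, smul_eq_mul]
    have hcont2 : Continuous (fun x : ℝ => (1/2)*(w/(I*L))^2 * trap ρ (x/L)) :=
      continuous_const.mul ((trap_cont ρ).comp (continuous_id.div_const L))
    have hsplitint : (∫ x in (0:ℝ)..L, ((1/2)*(w/(I*L))^2 * trap ρ (x/L) + W))
        = (1/2)*(w/(I*L))^2 * (L * I) + W * L := by
      rw [intervalIntegral.integral_add (hcont2.intervalIntegrable _ _)
        (intervalIntegrable_const)]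
      rw [intervalIntegral.integral_const_mul, hinttrap]
      simp [smul_eq_mul]
      ring
    have e1 : (1/2)*(w/(I*L))^2 * (L * I) = w * sW / (2*I) := by
      have : (1/2)*(w/(I*L))^2 * (L * I) = w^2/(2*I*L) := by field_simp
      rw [this, ← hLdef]; field_simp
    have e2 : W * L = w * sW / 2 := by
      field_simp
      linear_combination sW * hLdef - L * hsW2
    have h1I : 1/(2*I) ≤ 1/2 + 2*ρ := by
      rw [div_le_iff₀ (by positivity)]
      nlinarith
    have hkey : w * sW / (2*I) + w * sW / 2 ≤ w * sW * (1 + 2*ρ) := by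
      have hws : 0 ≤ w * sW := by positivity
      have heq : w * sW / (2*I) = w * sW * (1/(2*I)) := by ring
      rw [heq]
      have hmul : w * sW * (1/(2*I)) ≤ w * sW * (1/2 + 2*ρ) :=
        mul_le_mul_of_nonneg_left h1I hws
      nlinarith [hmul]
    have hfinal : w * sW * (1 + 2*ρ) ≤ (∫ s in a..b, Real.sqrt (2 * V s)) + c * w := by
      have hconst : w * sW * (1 + 2*ρ) = ∫ _s in a..b, sW * (1 + 2*ρ) := by
        rw [intervalIntegral.integral_const, smul_eq_mul, ← hwdef]; ring
      have hmono2 : (∫ _s in a..b, sW * (1 + 2*ρ)) ≤ ∫ s in a..b, (Real.sqrt (2 * V s) + c) := by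
        apply intervalIntegral.integral_mono_on hab.le intervalIntegrable_const
          (((sqrt2V_cont hVc).add continuous_const).intervalIntegrable _ _)
        exact hcomp
      have hadd : (∫ s in a..b, (Real.sqrt (2 * V s) + c))
          = (∫ s in a..b, Real.sqrt (2 * V s)) + c * w := by
        rw [intervalIntegral.integral_add ((sqrt2V_cont hVc).intervalIntegrable _ _)
          intervalIntegrable_const, intervalIntegral.integral_const, smul_eq_mul, ← hwdef]
        ring
      rw [hconst]
      rw [hadd] at hmono2
      exact hmono2
    calc energy V 0 L u ≤ (1/2)*(w/(I*L))^2 * (L * I) + W * L := by rw [← hsplitint]; exact hmono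
      _ = w * sW / (2*I) + w * sW / 2 := by rw [e1, e2]
      _ ≤ w * sW * (1 + 2*ρ) := hkey
      _ ≤ (∫ s in a..b, Real.sqrt (2 * V s)) + c * (b - a) := by rw [← hwdef]; exact hfinal

lemma IsProf.weaken {u : ℝ → ℝ} {a b L e e' : ℝ} (h : e ≤ e') (hp : IsProf V u a b L e) :
    IsProf V u a b L e' :=
  ⟨hp.1, hp.2.1, hp.2.2.1, hp.2.2.2.1, le_trans hp.2.2.2.2 h⟩

lemma atomStep (hVc : Continuous V) (hVn : ∀ t, 0 ≤ V t)
    {R h ω c ρ KR : ℝ} (hρ : 0 < ρ) (hρ8 : ρ ≤ 1/8) (hh : 0 < h)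
    (hω : 0 < ω) (hω1 : ω ≤ 1) (hKR0 : 0 ≤ KR) (hc0 : 0 ≤ c)
    (hmod : ∀ x ∈ Set.Icc (-R) R, ∀ y ∈ Set.Icc (-R) R, |x - y| ≤ h → |V x - V y| ≤ ω)
    (hKR : ∀ s ∈ Set.Icc (-R) R, Real.sqrt (2 * V s) ≤ KR)
    (hsum : 2*Real.sqrt ω + 2*ρ*(KR+2) ≤ c)
    {a b : ℝ} (hRa : -R ≤ a) (hbR : b ≤ R) (hab : a < b) (hbah : b - a ≤ h) :
    ∃ L u, IsProf V u a b L ((∫ s in a..b, Real.sqrt (2 * V s)) + c * (b - a)) ∧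
      L ≤ (b - a) / Real.sqrt (2*ω) ∧ 0 < L := by
  have haR : a ∈ Set.Icc (-R) R := ⟨hRa, by linarith⟩
  have hsub : ∀ v ∈ Set.Icc a b, v ∈ Set.Icc (-R) R := fun v hv =>
    ⟨by linarith [hv.1], by linarith [hv.2]⟩
  have hmodab : ∀ v ∈ Set.Icc a b, |V a - V v| ≤ ω := by
    intro v hv
    apply hmod a haR v (hsub v hv)
    rw [abs_sub_comm, abs_of_nonneg (by linarith [hv.1] : (0:ℝ) ≤ v - a)]
    linarith [hv.2]
  set W := V a + ω with hWdef
  have hWpos : 0 < W := by have := hVn a; simp [hWdef]; linarith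
  have hW : ∀ v ∈ Set.Icc a b, V v ≤ W := by
    intro v hv
    have := abs_le.1 (hmodab v hv)
    simp [hWdef]; linarith [this.1]
  have hsqω : Real.sqrt ω ^ 2 = ω := Real.sq_sqrt hω.le
  have hsqωnn : 0 ≤ Real.sqrt ω := Real.sqrt_nonneg _
  have hB : Real.sqrt (2*W) ≤ KR + 2 := by
    have h2Va : 2 * V a ≤ KR^2 := by
      have h1 := hKR a haR
      have h2 : Real.sqrt (2 * V a) ^ 2 = 2 * V a := Real.sq_sqrt (by linarith [hVn a])
      nlinarith [Real.sqrt_nonneg (2 * V a)]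
    have : 2*W ≤ (KR+2)^2 := by simp [hWdef]; nlinarith
    calc Real.sqrt (2*W) ≤ Real.sqrt ((KR+2)^2) := Real.sqrt_le_sqrt this
      _ = KR + 2 := Real.sqrt_sq (by linarith)
  have hcomp : ∀ s ∈ Set.Icc a b, Real.sqrt (2*W) * (1 + 2*ρ) ≤ Real.sqrt (2 * V s) + c := by
    intro s hs
    have hVs := hVn s
    have hBs : Real.sqrt (2 * V s) ^ 2 = 2 * V s := Real.sq_sqrt (by linarith)
    have hBsnn : 0 ≤ Real.sqrt (2 * V s) := Real.sqrt_nonneg _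
    have hWs : W ≤ V s + 2*ω := by
      have := abs_le.1 (hmodab s hs)
      simp [hWdef]; linarith [this.2]
    have hA : Real.sqrt (2*W) ≤ Real.sqrt (2 * V s) + 2*Real.sqrt ω := by
      have h2W : 2*W ≤ (Real.sqrt (2 * V s) + 2*Real.sqrt ω)^2 := by nlinarith
      calc Real.sqrt (2*W) ≤ Real.sqrt ((Real.sqrt (2 * V s) + 2*Real.sqrt ω)^2) :=
            Real.sqrt_le_sqrt h2W
        _ = Real.sqrt (2 * V s) + 2*Real.sqrt ω := Real.sqrt_sq (by positivity)
    have hC : 2*ρ*Real.sqrt (2*W) ≤ 2*ρ*(KR+2) :=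
      mul_le_mul_of_nonneg_left hB (by linarith)
    nlinarith [hA, hC]
  obtain ⟨L, u, hprof, hLeq⟩ := atom hVc hVn hρ hρ8 hab hWpos hc0 hW hcomp
  refine ⟨L, u, hprof, ?_, ?_⟩
  · rw [hLeq]
    apply div_le_div_of_nonneg_left (by linarith) (Real.sqrt_pos.2 (by linarith))
    apply Real.sqrt_le_sqrt
    have := hVn a
    simp [hWdef]; linarith
  · rw [hLeq]
    exact div_pos (by linarith) (Real.sqrt_pos.2 (by linarith))

lemma buildUp (hVc : Continuous V) (hVn : ∀ t, 0 ≤ V t)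
    {R h ω c ρ KR : ℝ} (hρ : 0 < ρ) (hρ8 : ρ ≤ 1/8) (hh : 0 < h)
    (hω : 0 < ω) (hω1 : ω ≤ 1) (hKR0 : 0 ≤ KR) (hc0 : 0 ≤ c)
    (hmod : ∀ x ∈ Set.Icc (-R) R, ∀ y ∈ Set.Icc (-R) R, |x - y| ≤ h → |V x - V y| ≤ ω)
    (hKR : ∀ s ∈ Set.Icc (-R) R, Real.sqrt (2 * V s) ≤ KR)
    (hsum : 2*Real.sqrt ω + 2*ρ*(KR+2) ≤ c) :
    ∀ n : ℕ, ∀ a b : ℝ, -R ≤ a → b ≤ R → a ≤ b → b - a ≤ n * h →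
      ∃ L u, IsProf V u a b L ((∫ s in a..b, Real.sqrt (2 * V s)) + c * (b - a)) ∧
        L ≤ (b - a) / Real.sqrt (2*ω) ∧ (a < b → 0 < L) := by
  intro n
  induction n with
  | zero =>
    intro a b hRa hbR hab hba
    have hba' : b = a := by push_cast at hba; linarith
    subst hba'
    refine ⟨0, fun _ => b, ⟨le_rfl, contDiff_const, fun _ _ => rfl, fun _ _ => rfl, ?_⟩,
      by simp, fun hc => absurd hc (lt_irrefl b)⟩
    unfold energy
    rw [intervalIntegral.integral_same, intervalIntegral.integral_same]
    simp
  | succ n ih =>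
    intro a b hRa hbR hab hba
    rcases eq_or_lt_of_le hab with heq | hlt
    · subst heq
      refine ⟨0, fun _ => a, ⟨le_rfl, contDiff_const, fun _ _ => rfl, fun _ _ => rfl, ?_⟩,
        by simp, fun hc => absurd hc (lt_irrefl a)⟩
      unfold energy
      rw [intervalIntegral.integral_same, intervalIntegral.integral_same]
      simp
    · by_cases hsmall : b - a ≤ h
      · obtain ⟨L, u, hprof, hLle, hLpos⟩ := atomStep hVc hVn hρ hρ8 hh hω hω1 hKR0 hc0
          hmod hKR hsum hRa hbR hlt hsmall
        exact ⟨L, u, hprof, hLle, fun _ => hLpos⟩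
      · push_neg at hsmall
        set m := a + h with hmdef
        have hmb : m < b := by simp [hmdef]; linarith
        have hmR : m ≤ R := by linarith
        have hRm : -R ≤ m := by linarith
        obtain ⟨L1, u1, hprof1, hL1le, hL1pos⟩ := atomStep hVc hVn hρ hρ8 hh hω hω1 hKR0 hc0
          hmod hKR hsum hRa hmR (by simp [hmdef]; linarith) (by simp [hmdef])
        obtain ⟨L2, u2, hprof2, hL2le, _⟩ := ih m b hRm hbR hmb.le
          (by push_cast at hba ⊢; simp [hmdef]; linarith)
        have hglue := IsProf.glue hVc hprof1 hprof2
        have hadj := intervalIntegral.integral_add_adjacent_intervals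
          (μ := MeasureTheory.volume) (a := a) (b := m) (c := b)
          ((sqrt2V_cont hVc).intervalIntegrable _ _) ((sqrt2V_cont hVc).intervalIntegrable _ _)
        have henergy : ((∫ s in a..m, Real.sqrt (2 * V s)) + c * (m - a))
            + ((∫ s in m..b, Real.sqrt (2 * V s)) + c * (b - m))
            = (∫ s in a..b, Real.sqrt (2 * V s)) + c * (b - a) := by
          rw [← hadj]; ring
        rw [henergy] at hglue
        refine ⟨L1 + L2, _, hglue, ?_, fun _ => by linarith [hprof2.1]⟩
        have hsω : 0 < Real.sqrt (2*ω) := Real.sqrt_pos.2 (by linarith)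
        have : (m - a) / Real.sqrt (2*ω) + (b - m) / Real.sqrt (2*ω)
            = (b - a) / Real.sqrt (2*ω) := by
          rw [← add_div]; ring_nf
        linarith

lemma builder (hVc : Continuous V) (hVn : ∀ t, 0 ≤ V t) {R : ℝ} (hR : 2 ≤ R)
    {ε : ℝ} (hε : 0 < ε) :
    ∃ Lb : ℝ, 0 < Lb ∧ ∀ a b : ℝ, a ∈ Set.Icc (-R) R → b ∈ Set.Icc (-R) R →
      ∃ L u, IsProf V u a b L (|Gf V b - Gf V a| + ε) ∧ L ≤ Lb ∧ (a ≠ b → 0 < L) := by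
  obtain ⟨K0, hK0⟩ := (isCompact_Icc (a := -R) (b := R)).exists_bound_of_continuousOn
    ((sqrt2V_cont hVc).continuousOn)
  set KR := max K0 0 with hKRdef
  have hKR0 : 0 ≤ KR := le_max_right _ _
  have hKR : ∀ s ∈ Set.Icc (-R) R, Real.sqrt (2 * V s) ≤ KR := by
    intro s hs
    have := hK0 s hs
    rw [Real.norm_eq_abs, abs_of_nonneg (Real.sqrt_nonneg _)] at this
    exact le_trans this (le_max_left _ _)
  set c := ε / (2*R+1) with hcdef
  have hc : 0 < c := div_pos hε (by linarith)
  set ρ := min (1/8) (c/(4*(KR+2))) with hρdef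
  have hρ : 0 < ρ := lt_min (by norm_num) (div_pos hc (by linarith))
  have hρ8 : ρ ≤ 1/8 := min_le_left _ _
  have hρc : 2*ρ*(KR+2) ≤ c/2 := by
    have h1 : ρ ≤ c/(4*(KR+2)) := min_le_right _ _
    have h2 : 0 < KR + 2 := by linarith
    rw [le_div_iff₀ (by linarith : (0:ℝ) < 4*(KR+2))] at h1
    nlinarith
  set ω := min 1 ((c/4)^2) with hωdef
  have hω : 0 < ω := lt_min one_pos (by positivity)
  have hω1 : ω ≤ 1 := min_le_left _ _
  have hsqω : Real.sqrt ω ≤ c/4 := by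
    calc Real.sqrt ω ≤ Real.sqrt ((c/4)^2) := Real.sqrt_le_sqrt (min_le_right _ _)
      _ = c/4 := Real.sqrt_sq (by positivity)
  have hsum : 2*Real.sqrt ω + 2*ρ*(KR+2) ≤ c := by linarith
  have huc := (isCompact_Icc (a := -R) (b := R)).uniformContinuousOn_of_continuous
    hVc.continuousOn
  rw [Metric.uniformContinuousOn_iff] at huc
  obtain ⟨d, hd, hduc⟩ := huc ω hω
  set h := d/2 with hhdef
  have hh : 0 < h := by positivity
  have hmod : ∀ x ∈ Set.Icc (-R) R, ∀ y ∈ Set.Icc (-R) R, |x - y| ≤ h → |V x - V y| ≤ ω := by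
    intro x hx y hy hxy
    have : dist x y < d := by rw [Real.dist_eq]; linarith
    have := hduc x hx y hy this
    rw [Real.dist_eq] at this
    linarith
  have hsω : 0 < Real.sqrt (2*ω) := Real.sqrt_pos.2 (by linarith)
  refine ⟨2*R/Real.sqrt (2*ω) + 1, by positivity, ?_⟩
  intro a b ha hb
  have hup : ∀ p q : ℝ, p ∈ Set.Icc (-R) R → q ∈ Set.Icc (-R) R → p < q →
      ∃ L u, IsProf V u p q L ((∫ s in p..q, Real.sqrt (2 * V s)) + c * (q - p)) ∧
        L ≤ 2*R/Real.sqrt (2*ω) ∧ 0 < L := by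
    intro p q hp hq hpq
    set n := ⌈(q-p)/h⌉₊ with hndef
    have hn : q - p ≤ n * h := by
      have h1 : (q-p)/h ≤ (n:ℝ) := Nat.le_ceil _
      rw [div_le_iff₀ hh] at h1
      linarith
    obtain ⟨L, u, hprof, hLle, hLpos⟩ := buildUp hVc hVn hρ hρ8 hh hω hω1 hKR0 hc.le
      hmod hKR hsum n p q hp.1 hq.2 hpq.le hn
    refine ⟨L, u, hprof, ?_, hLpos hpq⟩
    calc L ≤ (q-p)/Real.sqrt (2*ω) := hLle
      _ ≤ 2*R/Real.sqrt (2*ω) := by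
          apply (div_le_div_iff_of_pos_right hsω).2
          linarith [hp.1, hq.2]
  rcases lt_trichotomy a b with hlt | heq | hgt
  · obtain ⟨L, u, hprof, hLle, hLpos⟩ := hup a b ha hb hlt
    refine ⟨L, u, hprof.weaken ?_, by linarith, fun _ => hLpos⟩
    have h1 : (∫ s in a..b, Real.sqrt (2 * V s)) = Gf V b - Gf V a := (Gf_sub hVc a b).symm
    have h2 : Gf V b - Gf V a ≤ |Gf V b - Gf V a| := le_abs_self _
    have h3 : c * (b - a) ≤ ε := by
      have hba : b - a ≤ 2*R := by linarith [ha.1, hb.2]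
      have : c * (b - a) ≤ c * (2*R+1) := by nlinarith
      rw [hcdef] at this ⊢
      calc c * (b-a) ≤ ε / (2*R+1) * (2*R+1) := by rw [← hcdef]; exact this
        _ = ε := div_mul_cancel₀ ε (by linarith)
    linarith
  · subst heq
    refine ⟨0, fun _ => a, ⟨le_rfl, contDiff_const, fun _ _ => rfl, fun _ _ => rfl, ?_⟩,
      by positivity, fun hne => absurd rfl hne⟩
    unfold energy
    rw [intervalIntegral.integral_same]
    positivity
  · obtain ⟨L, u, hprof, hLle, hLpos⟩ := hup b a hb ha hgt
    refine ⟨L, _, (hprof.reverse).weaken ?_, by linarith, fun _ => hLpos⟩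
    have h1 : (∫ s in b..a, Real.sqrt (2 * V s)) = Gf V a - Gf V b := (Gf_sub hVc b a).symm
    have h2 : Gf V a - Gf V b ≤ |Gf V b - Gf V a| := by
      rw [abs_sub_comm]; exact le_abs_self _
    have h3 : c * (a - b) ≤ ε := by
      have hba : a - b ≤ 2*R := by linarith [hb.1, ha.2]
      have : c * (a - b) ≤ c * (2*R+1) := by nlinarith
      calc c * (a-b) ≤ ε / (2*R+1) * (2*R+1) := by rw [← hcdef]; exact this
        _ = ε := div_mul_cancel₀ ε (by linarith)
    linarith

lemma V_one_eq (hV : Assumption1 V) : V 1 = 0 := (hV.zero_iff 1 one_pos).2 rfl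

lemma V_neg_one_eq (hV : Assumption1 V) : V (-1) = 0 := by
  rw [hV.even 1]; exact V_one_eq hV

lemma V_pos_ne_one (hV : Assumption1 V) {t : ℝ} (ht : 0 < t) (hne : t ≠ 1) : 0 < V t := by
  rcases lt_or_eq_of_le (hV.nonneg t) with h | h
  · exact h
  · exact absurd ((hV.zero_iff t ht).1 h.symm) hne

lemma V_zero_pos (hV : Assumption1 V) : 0 < V 0 := by
  by_contra hc
  push_neg at hc
  have hV0 : V 0 = 0 := le_antisymm hc (hV.nonneg 0)
  have hVhalf : 0 < V (1/2) := V_pos_ne_one hV (by norm_num) (by norm_num)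
  obtain ⟨cm, hcm, hmax⟩ := isCompact_Icc.exists_isMaxOn (Set.nonempty_Icc.2 zero_le_one)
    (hV.smooth.continuous.continuousOn)
  have hVcm : V (1/2) ≤ V cm := hmax (by norm_num : (1/2:ℝ) ∈ Set.Icc (0:ℝ) 1)
  have hcm0 : cm ≠ 0 := fun h => by rw [h, hV0] at hVcm; linarith
  have hcm1 : cm ≠ 1 := fun h => by rw [h, V_one_eq hV] at hVcm; linarith
  have hcmo : 0 < cm ∧ cm < 1 := by
    constructor
    · exact lt_of_le_of_ne hcm.1 (Ne.symm hcm0)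
    · exact lt_of_le_of_ne hcm.2 hcm1
  have hloc : IsLocalMax V cm := hmax.isLocalMax (Icc_mem_nhds hcmo.1 hcmo.2)
  have := hloc.deriv_eq_zero
  exact hcm1 ((hV.deriv_zero_iff cm hcmo.1).1 this)

lemma V_pos_away (hV : Assumption1 V) {t : ℝ} (ht1 : t ≠ 1) (ht2 : t ≠ -1) : 0 < V t := by
  rcases lt_trichotomy t 0 with h | h | h
  · have : 0 < V (-t) := V_pos_ne_one hV (by linarith) (fun he => ht2 (by linarith))
    rwa [hV.even t] at this
  · rw [h]; exact V_zero_pos hV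
  · exact V_pos_ne_one hV h ht1

lemma eps_away (hV : Assumption1 V) {δ : ℝ} (hδ : 0 < δ) (hδ2 : δ ≤ 1/2) :
    ∃ ε0 : ℝ, 0 < ε0 ∧ ∀ t : ℝ, δ ≤ |t - 1| → δ ≤ |t + 1| → ε0 ≤ V t := by
  obtain ⟨C0, hC0, β, hβ, hg⟩ := hV.growth
  set R0 := max C0 1 with hR0def
  have hR0 : 1 ≤ R0 := le_max_right _ _
  have hR0C : C0 ≤ R0 := le_max_left _ _
  have hVbig : ∀ t : ℝ, R0 ≤ |t| → R0 ^ (1+β) / C0 ≤ V t := by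
    have hpos : ∀ t : ℝ, R0 ≤ t → R0 ^ (1+β) / C0 ≤ V t := by
      intro t ht
      have h1 := hg t (le_trans hR0C ht)
      have h2 : R0 ^ (1+β) ≤ t ^ (1+β) :=
        Real.rpow_le_rpow (by linarith) ht (by linarith)
      have h3 : R0 ^ (1+β) / C0 ≤ t ^ (1+β) / C0 := (div_le_div_iff_of_pos_right hC0).2 h2
      linarith
    intro t ht
    rcases le_total 0 t with h | h
    · rw [abs_of_nonneg h] at ht; exact hpos t ht
    · rw [abs_of_nonpos h] at ht
      have := hpos (-t) ht
      rwa [hV.even t] at this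
  have hε1 : 0 < R0 ^ (1+β) / C0 :=
    div_pos (Real.rpow_pos_of_pos (by linarith) _) hC0
  set S := {t : ℝ | t ∈ Set.Icc (-(R0+1)) (R0+1) ∧ δ ≤ |t - 1| ∧ δ ≤ |t + 1|} with hSdef
  have hSclosed : IsClosed S := by
    apply IsClosed.inter
    · exact isClosed_Icc
    · apply IsClosed.inter
      · exact isClosed_le continuous_const ((continuous_id.sub continuous_const).abs)
      · exact isClosed_le continuous_const ((continuous_id.add continuous_const).abs)
  have hScomp : IsCompact S :=
    isCompact_Icc.of_isClosed_subset hSclosed (fun t ht => ht.1)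
  have hSne : S.Nonempty := by
    refine ⟨0, ⟨⟨by linarith, by linarith⟩, ?_, ?_⟩⟩
    · rw [zero_sub, abs_neg, abs_one]; linarith
    · rw [zero_add, abs_one]; linarith
  obtain ⟨t0, ht0S, hmin⟩ := hScomp.exists_isMinOn hSne (hV.smooth.continuous.continuousOn)
  have ht0pos : 0 < V t0 := by
    apply V_pos_away hV
    · intro h; have h' := ht0S.2.1; rw [h] at h'; norm_num at h'; linarith
    · intro h; have h' := ht0S.2.2; rw [h] at h'; norm_num at h'; linarith
  refine ⟨min (R0 ^ (1+β) / C0) (V t0), lt_min hε1 ht0pos, ?_⟩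
  intro t h1 h2
  rcases le_total |t| (R0+1) with h | h
  · have habs := abs_le.1 h
    have htS : t ∈ S := ⟨⟨habs.1, habs.2⟩, h1, h2⟩
    exact le_trans (min_le_right _ _) (hmin htS)
  · exact le_trans (min_le_left _ _) (hVbig t (by linarith))

lemma Gf_neg_one (hV : Assumption1 V) (hVc : Continuous V) : Gf V (-1) = -Gf V 1 := by
  have hsym : Gf V (-1) = -∫ s in (-1:ℝ)..0, Real.sqrt (2 * V s) := by
    unfold Gf
    rw [intervalIntegral.integral_symm]
  have hcomp : (∫ s in (0:ℝ)..1, Real.sqrt (2 * V (-s))) = ∫ s in (-1:ℝ)..0, Real.sqrt (2 * V s) := by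
    have := intervalIntegral.integral_comp_neg (a := (0:ℝ)) (b := 1)
      (fun s => Real.sqrt (2 * V s))
    simpa using this
  have heven : (∫ s in (0:ℝ)..1, Real.sqrt (2 * V (-s))) = Gf V 1 := by
    unfold Gf
    apply intervalIntegral.integral_congr
    intro x _
    dsimp only
    rw [hV.even x]
  rw [hsym, ← hcomp, heven]

lemma c0_eq (hV : Assumption1 V) (hVc : Continuous V) : c0 V = 2 * Gf V 1 := by
  have h1 : Gf V 1 - Gf V (-1) = ∫ s in (-1:ℝ)..1, Real.sqrt (2 * V s) := Gf_sub hVc (-1) 1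
  have h2 := Gf_neg_one hV hVc
  unfold c0
  linarith

lemma glueFun_eval {b L1 : ℝ} {u1 u2 : ℝ → ℝ} (h1 : ∀ x, L1 ≤ x → u1 x = b)
    {x : ℝ} (hx : L1 ≤ x) : glueFun b L1 u1 u2 x = u2 (x - L1) := by
  show u1 x + u2 (x - L1) - b = u2 (x - L1)
  rw [h1 x hx]; ring

end Wasted

set_option maxHeartbeats 2000000 in
/-- Upper bound for the cost of a wasted `δ⁺` excursion (Lemma 2.7): for boundary values in
`[−M, 0]`, requiring points `x₋ < x₀ < x₊` in `[−ℓ, ℓ]` with `u(x₋), u(x₊) ≤ −1−2δ` and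
`u(x₀) ≥ δ` raises the minimal energy on `(−2ℓ, 2ℓ)` by at most `c₀ + Cδ`. -/
theorem wasted_plus_excursion_cost_upper
    (V : ℝ → ℝ) (hV : Assumption1 V) :
    ∃ C : ℝ, 0 < C ∧
      ∀ M : ℝ, ∀ δ : ℝ, δ ∈ Set.Ioo (0:ℝ) (1/2) →
        ∃ lstar : ℝ, ∀ ℓ : ℝ, lstar ≤ ℓ →
          ∀ um up : ℝ, um ∈ Set.Icc (-M) 0 → up ∈ Set.Icc (-M) 0 →
            sInf {e : ℝ | ∃ u : ℝ → ℝ, ContDiff ℝ 1 u ∧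
                u (-(2*ℓ)) = um ∧ u (2*ℓ) = up ∧
                (∃ xm x0 xp : ℝ, -ℓ ≤ xm ∧ xm < x0 ∧ x0 < xp ∧ xp ≤ ℓ ∧
                  u xm ≤ -1 - 2*δ ∧ u xp ≤ -1 - 2*δ ∧ δ ≤ u x0) ∧
                e = energy V (-(2*ℓ)) (2*ℓ) u} -
            sInf {e : ℝ | ∃ u : ℝ → ℝ, ContDiff ℝ 1 u ∧
                u (-(2*ℓ)) = um ∧ u (2*ℓ) = up ∧
                e = energy V (-(2*ℓ)) (2*ℓ) u} ≤
            c0 V + C * δ := by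
  classical
  have hVc : Continuous V := hV.smooth.continuous
  have hVn : ∀ t, 0 ≤ V t := hV.nonneg
  -- bound K0 for sqrt(2V) on [-2,2]
  obtain ⟨K0', hK0'⟩ := (isCompact_Icc (a := (-2:ℝ)) (b := 2)).exists_bound_of_continuousOn
    ((Wasted.sqrt2V_cont hVc).continuousOn)
  set K0 := max K0' 1 with hK0def
  have hK01 : 1 ≤ K0 := le_max_right _ _
  have hK0 : ∀ s ∈ Set.Icc (-2:ℝ) 2, Real.sqrt (2 * V s) ≤ K0 := by
    intro s hs
    have := hK0' s hs
    rw [Real.norm_eq_abs, abs_of_nonneg (Real.sqrt_nonneg _)] at this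
    exact le_trans this (le_max_left _ _)
  refine ⟨12*K0 + 6, by linarith, ?_⟩
  intro M δ hδ
  obtain ⟨hδ0, hδ2⟩ := hδ
  -- radius
  set R := max M 0 + 4 with hRdef
  have hR4 : 4 ≤ R := by have := le_max_right M 0; linarith
  have hR2 : 2 ≤ R := by linarith
  have hMR : M ≤ R - 4 := by have := le_max_left M 0; linarith
  -- epsilon away from wells
  obtain ⟨ε0, hε0, hε0p⟩ := Wasted.eps_away hV hδ0 (by linarith)
  -- builder
  obtain ⟨Lb, hLb, hbuild⟩ := Wasted.builder hVc hVn hR2 hδ0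
  -- KR bound on [-R,R]
  obtain ⟨KR', hKR'⟩ := (isCompact_Icc (a := -R) (b := R)).exists_bound_of_continuousOn
    ((Wasted.sqrt2V_cont hVc).continuousOn)
  set KR := max KR' 0 with hKRdef
  have hKR0 : 0 ≤ KR := le_max_right _ _
  have hKR : ∀ s ∈ Set.Icc (-R) R, Real.sqrt (2 * V s) ≤ KR := by
    intro s hs
    have := hKR' s hs
    rw [Real.norm_eq_abs, abs_of_nonneg (Real.sqrt_nonneg _)] at this
    exact le_trans this (le_max_left _ _)
  refine ⟨max (16*(Lb+1)) (KR*R/ε0 + 1), ?_⟩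
  intro ℓ hℓ um up hum hup
  have hℓLb : 16*(Lb+1) ≤ ℓ := le_trans (le_max_left _ _) hℓ
  have hℓKR : KR*R/ε0 + 1 ≤ ℓ := le_trans (le_max_right _ _) hℓ
  have hℓ0 : 0 < ℓ := by linarith only [hℓLb, hLb]
  -- membership facts
  have humIcc : um ∈ Set.Icc (-R) R := ⟨by linarith [hum.1], by linarith [hum.2]⟩
  have hupIcc : up ∈ Set.Icc (-R) R := ⟨by linarith [hup.1], by linarith [hup.2]⟩
  have hm1Icc : (-1:ℝ) ∈ Set.Icc (-R) R := ⟨by linarith, by linarith⟩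
  have hm12Icc : (-1-2*δ:ℝ) ∈ Set.Icc (-R) R := ⟨by linarith, by linarith⟩
  have hδIcc : (δ:ℝ) ∈ Set.Icc (-R) R := ⟨by linarith, by linarith⟩
  -- build the six pieces
  obtain ⟨L1, u1, hp1, hL1b, hL1p⟩ := hbuild um (-1) humIcc hm1Icc
  obtain ⟨L2, u2, hp2, hL2b, hL2p⟩ := hbuild (-1) (-1-2*δ) hm1Icc hm12Icc
  obtain ⟨L3, u3, hp3, hL3b, hL3p⟩ := hbuild (-1-2*δ) δ hm12Icc hδIcc
  obtain ⟨L4, u4, hp4, hL4b, hL4p⟩ := hbuild δ (-1-2*δ) hδIcc hm12Icc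
  obtain ⟨L5, u5, hp5, hL5b, hL5p⟩ := hbuild (-1-2*δ) (-1) hm12Icc hm1Icc
  obtain ⟨L6, u6, hp6, hL6b, hL6p⟩ := hbuild (-1) up hm1Icc hupIcc
  have hL3pos : 0 < L3 := hL3p (by intro h; linarith only [hδ0, h])
  have hL4pos : 0 < L4 := hL4p (by intro h; linarith only [hδ0, h])
  have hL10 : 0 ≤ L1 := hp1.1
  have hL20 : 0 ≤ L2 := hp2.1
  have hL50 : 0 ≤ L5 := hp5.1
  have hL60 : 0 ≤ L6 := hp6.1
  set T1 := 2*ℓ - L1 - L2 - L3 with hT1def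
  set T2 := 2*ℓ - L4 - L5 - L6 with hT2def
  have hT1 : 0 ≤ T1 := by linarith only [hT1def, hL1b, hL2b, hL3b, hℓLb, hLb]
  have hT2 : 0 ≤ T2 := by linarith only [hT2def, hL4b, hL5b, hL6b, hℓLb, hLb]
  have hVm1 : V (-1) = 0 := Wasted.V_neg_one_eq hV
  -- glue everything
  set W7 := Wasted.glueFun (-1) T2 (fun _ => (-1:ℝ)) u6 with hW7def
  set W6 := Wasted.glueFun (-1) L5 u5 W7 with hW6def
  set W5 := Wasted.glueFun (-1-2*δ) L4 u4 W6 with hW5def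
  set W4 := Wasted.glueFun δ L3 u3 W5 with hW4def
  set W3 := Wasted.glueFun (-1-2*δ) L2 u2 W4 with hW3def
  set W2 := Wasted.glueFun (-1) T1 (fun _ => (-1:ℝ)) W3 with hW2def
  set W1 := Wasted.glueFun (-1) L1 u1 W2 with hW1def
  have hq7 : Wasted.IsProf V W7 (-1) up (T2 + L6) (0 + (|Wasted.Gf V up - Wasted.Gf V (-1)| + δ)) :=
    Wasted.IsProf.glue hVc (Wasted.IsProf.const hVc hT2 hVm1) hp6
  have hq6 := Wasted.IsProf.glue hVc hp5 hq7
  have hq5 := Wasted.IsProf.glue hVc hp4 hq6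
  have hq4 := Wasted.IsProf.glue hVc hp3 hq5
  have hq3 := Wasted.IsProf.glue hVc hp2 hq4
  have hq2 := Wasted.IsProf.glue hVc (Wasted.IsProf.const hVc hT1 hVm1) hq3
  have hq1 := Wasted.IsProf.glue hVc hp1 hq2
  -- total length is 4ℓ
  have hLtot : L1 + (T1 + (L2 + (L3 + (L4 + (L5 + (T2 + L6)))))) = 4*ℓ := by
    simp only [hT1def, hT2def]; ring
  rw [hLtot] at hq1
  -- the competitor
  set w := fun x => W1 (x + 2*ℓ) with hwdef
  have hwc : ContDiff ℝ 1 w := hq1.2.1.comp (contDiff_id.add contDiff_const)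
  have hwderiv : ∀ x, deriv w x = deriv W1 (x + 2*ℓ) := by
    intro x
    exact deriv_comp_add_const W1 (2*ℓ) x
  have hwenergy : energy V (-(2*ℓ)) (2*ℓ) w = energy V 0 (4*ℓ) W1 := by
    unfold energy
    have hcongr : (∫ x in (-(2*ℓ))..(2*ℓ), ((1/2) * (deriv w x)^2 + V (w x)))
        = ∫ x in (-(2*ℓ))..(2*ℓ),
            ((fun y => (1/2) * (deriv W1 y)^2 + V (W1 y)) (x + 2*ℓ)) := by
      apply intervalIntegral.integral_congr
      intro x _
      dsimp only
      rw [hwderiv x]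
    have h2 := intervalIntegral.integral_comp_add_right (a := -(2*ℓ)) (b := 2*ℓ)
      (fun y => (1/2) * (deriv W1 y)^2 + V (W1 y)) (2*ℓ)
    rw [hcongr, h2]
    rw [show (-(2*ℓ) + 2*ℓ : ℝ) = 0 by ring, show (2*ℓ + 2*ℓ : ℝ) = 4*ℓ by ring]
  -- boundary values
  have hwleft : w (-(2*ℓ)) = um := by
    show W1 (-(2*ℓ) + 2*ℓ) = um
    rw [show (-(2*ℓ) + 2*ℓ : ℝ) = 0 by ring]
    exact hq1.2.2.1 0 le_rfl
  have hwright : w (2*ℓ) = up := by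
    show W1 (2*ℓ + 2*ℓ) = up
    exact hq1.2.2.2.1 (2*ℓ + 2*ℓ) (by linarith)
  -- tails for evaluation
  have ht1 : ∀ x, L1 ≤ x → u1 x = -1 := hp1.2.2.2.1
  have htpad1 : ∀ x : ℝ, T1 ≤ x → (fun _ => (-1:ℝ)) x = -1 := fun x _ => rfl
  have ht2 : ∀ x, L2 ≤ x → u2 x = -1-2*δ := hp2.2.2.2.1
  have ht3 : ∀ x, L3 ≤ x → u3 x = δ := hp3.2.2.2.1
  have ht4 : ∀ x, L4 ≤ x → u4 x = -1-2*δ := hp4.2.2.2.1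
  -- evaluations at the excursion points
  have hxm : w (-L3) = -1-2*δ := by
    show W1 (-L3 + 2*ℓ) = -1-2*δ
    rw [hW1def, Wasted.glueFun_eval ht1 (by linarith)]
    rw [hW2def, Wasted.glueFun_eval htpad1 (by linarith)]
    rw [hW3def, Wasted.glueFun_eval ht2 (by linarith)]
    exact hq4.2.2.1 _ (by linarith)
  have hx0 : w 0 = δ := by
    show W1 (0 + 2*ℓ) = δ
    rw [hW1def, Wasted.glueFun_eval ht1 (by linarith)]
    rw [hW2def, Wasted.glueFun_eval htpad1 (by linarith)]
    rw [hW3def, Wasted.glueFun_eval ht2 (by linarith)]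
    rw [hW4def, Wasted.glueFun_eval ht3 (by linarith)]
    exact hq5.2.2.1 _ (by linarith)
  have hxp : w L4 = -1-2*δ := by
    show W1 (L4 + 2*ℓ) = -1-2*δ
    rw [hW1def, Wasted.glueFun_eval ht1 (by linarith)]
    rw [hW2def, Wasted.glueFun_eval htpad1 (by linarith)]
    rw [hW3def, Wasted.glueFun_eval ht2 (by linarith)]
    rw [hW4def, Wasted.glueFun_eval ht3 (by linarith)]
    rw [hW5def, Wasted.glueFun_eval ht4 (by linarith)]
    exact hq6.2.2.1 _ (by linarith)
  -- energy estimates for the competitor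
  have hGm1 : Wasted.Gf V (-1) = -(c0 V)/2 := by
    have h1 := Wasted.Gf_neg_one hV hVc
    have h2 := Wasted.c0_eq hV hVc
    linarith
  have hG1 : Wasted.Gf V 1 = c0 V / 2 := by
    have h2 := Wasted.c0_eq hV hVc
    linarith
  have hG0 : Wasted.Gf V 0 = 0 := intervalIntegral.integral_same
  have hGmono := fun {a b : ℝ} (h : a ≤ b) => Wasted.Gf_mono hVc h
  have hlip := fun {s t : ℝ} (hs : s ∈ Set.Icc (-2:ℝ) 2) (ht : t ∈ Set.Icc (-2:ℝ) 2) =>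
    Wasted.Gf_lip hVc hK0 hs ht
  have hm2 : (-1-2*δ:ℝ) ∈ Set.Icc (-2:ℝ) 2 := ⟨by linarith, by linarith⟩
  have hm1' : (-1:ℝ) ∈ Set.Icc (-2:ℝ) 2 := ⟨by linarith, by linarith⟩
  have hδ' : (δ:ℝ) ∈ Set.Icc (-2:ℝ) 2 := ⟨by linarith, by linarith⟩
  have h0' : (0:ℝ) ∈ Set.Icc (-2:ℝ) 2 := ⟨by linarith, by linarith⟩
  have hE1 : |Wasted.Gf V (-1-2*δ) - Wasted.Gf V (-1)| ≤ K0*(2*δ) := by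
    have h := hlip hm1' hm2
    have h2 : K0 * |(-1-2*δ) - (-1)| = K0*(2*δ) := by
      rw [show ((-1-2*δ) - (-1) : ℝ) = -(2*δ) by ring, abs_neg,
        abs_of_nonneg (by linarith : (0:ℝ) ≤ 2*δ)]
    rw [h2] at h
    exact h
  have hEδ : |Wasted.Gf V δ - Wasted.Gf V 0| ≤ K0*δ := by
    have h := hlip h0' hδ'
    have h2 : K0 * |δ - 0| = K0*δ := by
      rw [sub_zero, abs_of_nonneg hδ0.le]
    rw [h2] at h
    exact h
  have hmid : |Wasted.Gf V δ - Wasted.Gf V (-1-2*δ)| ≤ c0 V / 2 + 3*(K0*δ) := by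
    have hmono1 : Wasted.Gf V (-1-2*δ) ≤ Wasted.Gf V δ := hGmono (by linarith)
    rw [abs_of_nonneg (by linarith)]
    have h1 := abs_le.1 hE1
    have h2 := abs_le.1 hEδ
    linarith
  have hmid' : |Wasted.Gf V (-1-2*δ) - Wasted.Gf V δ| ≤ c0 V / 2 + 3*(K0*δ) := by
    rw [abs_sub_comm]; exact hmid
  have hE5 : |Wasted.Gf V (-1) - Wasted.Gf V (-1-2*δ)| ≤ K0*(2*δ) := by
    rw [abs_sub_comm]; exact hE1
  set cost := |Wasted.Gf V (-1) - Wasted.Gf V um| + |Wasted.Gf V up - Wasted.Gf V (-1)|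
    with hcostdef
  have hwtotal : energy V (-(2*ℓ)) (2*ℓ) w ≤ cost + c0 V + (10*K0 + 6)*δ := by
    rw [hwenergy]
    have := hq1.2.2.2.2
    simp only [hcostdef]
    linarith
  -- the two sets
  set A := {e : ℝ | ∃ u : ℝ → ℝ, ContDiff ℝ 1 u ∧
      u (-(2*ℓ)) = um ∧ u (2*ℓ) = up ∧
      (∃ xm x0 xp : ℝ, -ℓ ≤ xm ∧ xm < x0 ∧ x0 < xp ∧ xp ≤ ℓ ∧
        u xm ≤ -1 - 2*δ ∧ u xp ≤ -1 - 2*δ ∧ δ ≤ u x0) ∧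
      e = energy V (-(2*ℓ)) (2*ℓ) u} with hAdef
  set B := {e : ℝ | ∃ u : ℝ → ℝ, ContDiff ℝ 1 u ∧
      u (-(2*ℓ)) = um ∧ u (2*ℓ) = up ∧
      e = energy V (-(2*ℓ)) (2*ℓ) u} with hBdef
  have hmemA : energy V (-(2*ℓ)) (2*ℓ) w ∈ A := by
    refine ⟨w, hwc, hwleft, hwright, ⟨-L3, 0, L4, ?_, ?_, ?_, ?_, ?_, ?_, ?_⟩, rfl⟩
    · have : L3 ≤ Lb := hL3b
      linarith
    · linarith
    · linarith
    · linarith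
    · exact hxm.le
    · exact hxp.le
    · exact hx0.ge
  have hmemB : energy V (-(2*ℓ)) (2*ℓ) w ∈ B := ⟨w, hwc, hwleft, hwright, rfl⟩
  have hAbdd : BddBelow A := by
    refine ⟨0, ?_⟩
    rintro e ⟨u, hu, -, -, -, rfl⟩
    exact Wasted.energy_nonneg hVn (by linarith) u
  have hsInfA : sInf A ≤ cost + c0 V + (10*K0 + 6)*δ :=
    le_trans (csInf_le hAbdd hmemA) hwtotal
  -- lower bound for B
  have hlower : ∀ e ∈ B, cost - 2*(K0*δ) ≤ e := by
    rintro e ⟨u, hu, hum', hup', rfl⟩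
    by_cases hnear : ∃ x ∈ Set.Icc (-(2*ℓ)) (2*ℓ), |u x + 1| ≤ δ ∨ |u x - 1| ≤ δ
    · obtain ⟨x0, hx0I, hcase⟩ := hnear
      have hsplit := Wasted.energy_split hVc hu (-(2*ℓ)) x0 (2*ℓ)
      have hlow1 : |Wasted.Gf V (u x0) - Wasted.Gf V um| ≤ energy V (-(2*ℓ)) x0 u := by
        have := Wasted.abs_Gf_sub_le_energy hVc hVn hu (hx0I.1)
        rwa [hum'] at this
      have hlow2 : |Wasted.Gf V up - Wasted.Gf V (u x0)| ≤ energy V x0 (2*ℓ) u := by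
        have := Wasted.abs_Gf_sub_le_energy hVc hVn hu (hx0I.2)
        rwa [hup'] at this
      rcases hcase with hc1 | hc2
      · -- near -1
        have hux : u x0 ∈ Set.Icc (-2:ℝ) 2 := by
          have := abs_le.1 hc1
          constructor <;> linarith
        have hlipx : |Wasted.Gf V (u x0) - Wasted.Gf V (-1)| ≤ K0*δ := by
          have h := hlip hm1' hux
          have habs : |u x0 - (-1)| ≤ δ := by
            have := abs_le.1 hc1
            rw [abs_le]; constructor <;> linarith
          have hK0' : K0 * |u x0 - (-1)| ≤ K0 * δ :=
            mul_le_mul_of_nonneg_left habs (by linarith)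
          exact le_trans h hK0'
        have htr1 : |Wasted.Gf V (-1) - Wasted.Gf V um| ≤
            |Wasted.Gf V (u x0) - Wasted.Gf V um| + K0*δ := by
          have := abs_sub_le (Wasted.Gf V (-1)) (Wasted.Gf V (u x0)) (Wasted.Gf V um)
          have h2 : |Wasted.Gf V (-1) - Wasted.Gf V (u x0)| ≤ K0*δ := by
            rw [abs_sub_comm]; exact hlipx
          linarith
        have htr2 : |Wasted.Gf V up - Wasted.Gf V (-1)| ≤
            |Wasted.Gf V up - Wasted.Gf V (u x0)| + K0*δ := by
          have := abs_sub_le (Wasted.Gf V up) (Wasted.Gf V (u x0)) (Wasted.Gf V (-1))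
          linarith
        simp only [hcostdef]
        linarith
      · -- near +1
        have hux : u x0 ∈ Set.Icc (-2:ℝ) 2 := by
          have := abs_le.1 hc2
          constructor <;> linarith
        have h1' : (1:ℝ) ∈ Set.Icc (-2:ℝ) 2 := ⟨by linarith, by linarith⟩
        have hlipx : |Wasted.Gf V (u x0) - Wasted.Gf V 1| ≤ K0*δ := by
          have h := hlip h1' hux
          have habs : |u x0 - 1| ≤ δ := hc2
          have hK0'' : K0 * |u x0 - 1| ≤ K0 * δ :=
            mul_le_mul_of_nonneg_left habs (by linarith)
          exact le_trans h hK0''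
        have hGum0 : Wasted.Gf V um ≤ 0 := by
          have := hGmono (hum.2)
          rwa [hG0] at this
        have hGup0 : Wasted.Gf V up ≤ 0 := by
          have := hGmono (hup.2)
          rwa [hG0] at this
        have hc0nn : 0 ≤ c0 V := by
          have := hGmono (show (-1:ℝ) ≤ 1 by linarith)
          rw [hGm1, hG1] at this
          linarith
        have habs1 : |Wasted.Gf V (-1) - Wasted.Gf V um| ≤ Wasted.Gf V 1 - Wasted.Gf V um := by
          rw [abs_le]
          constructor
          · rw [hGm1, hG1]; linarith
          · rw [hGm1, hG1]; linarith
        have habs2 : |Wasted.Gf V up - Wasted.Gf V (-1)| ≤ Wasted.Gf V 1 - Wasted.Gf V up := by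
          rw [abs_le]
          constructor
          · rw [hGm1, hG1]; linarith
          · rw [hGm1, hG1]; linarith
        have hval1 : Wasted.Gf V (u x0) - Wasted.Gf V um ≤
            |Wasted.Gf V (u x0) - Wasted.Gf V um| := le_abs_self _
        have hval2 : Wasted.Gf V (u x0) - Wasted.Gf V up ≤
            |Wasted.Gf V up - Wasted.Gf V (u x0)| := by
          rw [abs_sub_comm]; exact le_abs_self _
        have hGux1 : Wasted.Gf V 1 - K0*δ ≤ Wasted.Gf V (u x0) := by
          have := abs_le.1 hlipx
          linarith
        simp only [hcostdef]
        linarith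
    · -- far from both wells: huge energy
      push_neg at hnear
      have hpt : ∀ x ∈ Set.Icc (-(2*ℓ)) (2*ℓ), ε0 ≤ V (u x) := by
        intro x hx
        obtain ⟨h1, h2⟩ := hnear x hx
        exact hε0p (u x) (le_of_lt h2) (le_of_lt h1)
      have hEbig : 4*ℓ*ε0 ≤ energy V (-(2*ℓ)) (2*ℓ) u := by
        have hconst : (∫ _x in (-(2*ℓ))..(2*ℓ), ε0) = 4*ℓ*ε0 := by
          rw [intervalIntegral.integral_const, smul_eq_mul]
          ring
        rw [← hconst]
        apply intervalIntegral.integral_mono_on (by linarith)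
          intervalIntegrable_const ((Wasted.integrand_cont hVc hu).intervalIntegrable _ _)
        intro x hx
        have h5 := hpt x hx
        have h6 := sq_nonneg (deriv u x)
        linarith only [h5, h6]
      have hcostb : cost ≤ 2*(KR*R) := by
        have hb1 : |Wasted.Gf V (-1) - Wasted.Gf V um| ≤ KR * |(-1) - um| :=
          Wasted.Gf_lip hVc hKR humIcc hm1Icc
        have hb2 : |Wasted.Gf V up - Wasted.Gf V (-1)| ≤ KR * |up - (-1)| :=
          Wasted.Gf_lip hVc hKR hm1Icc hupIcc
        have habs1 : |(-1) - um| ≤ R := by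
          rw [abs_le]
          constructor
          · linarith [hum.2, hR4]
          · linarith [hum.1, hMR]
        have habs2 : |up - (-1)| ≤ R := by
          rw [abs_le]
          constructor
          · linarith [hup.1, hMR]
          · linarith [hup.2, hR4]
        have h1 : KR * |(-1) - um| ≤ KR * R := mul_le_mul_of_nonneg_left habs1 hKR0
        have h2 : KR * |up - (-1)| ≤ KR * R := mul_le_mul_of_nonneg_left habs2 hKR0
        simp only [hcostdef]
        linarith
      have h4l : 2*(KR*R) ≤ 4*ℓ*ε0 := by
        have h1 : KR*R/ε0 ≤ ℓ := by linarith only [hℓKR]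
        have h2 : KR*R ≤ ℓ * ε0 := by
          rw [div_le_iff₀ hε0] at h1
          linarith only [h1]
        linarith only [h2, mul_nonneg hℓ0.le hε0.le]
      have h7 : cost ≤ energy V (-(2*ℓ)) (2*ℓ) u := by
        linarith only [hcostb, h4l, hEbig]
      linarith only [h7, mul_nonneg (by linarith only [hK01] : (0:ℝ) ≤ K0) hδ0.le]
  have hBne : B.Nonempty := ⟨_, hmemB⟩
  have hsInfB : cost - 2*(K0*δ) ≤ sInf B := le_csInf hBne hlower
  have hC : sInf A - sInf B ≤ c0 V + (12*K0 + 6)*δ := by linarith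
  linarith
end

section
/- Convergence of the finite-interval minimal transition energy: Assume V satisfies Assumption 1. For ℓ > 0 let I(ℓ) be the infimum of E_{(−ℓ,ℓ)}(u) over all continuously differentiable u : ℝ → ℝ with u(−ℓ) = −1 and u(ℓ) = 1. Then I(ℓ) → c₀ as ℓ → ∞. -/
open MeasureTheory Filter

namespace FIMETC

open Set intervalIntegral

/-- `√(x+y) ≤ √x + √y`. -/
lemma sqrt_add_le {x y : ℝ} (hx : 0 ≤ x) (hy : 0 ≤ y) :
    Real.sqrt (x + y) ≤ Real.sqrt x + Real.sqrt y := by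
  have h : x + y ≤ (Real.sqrt x + Real.sqrt y)^2 := by
    nlinarith [Real.sq_sqrt hx, Real.sq_sqrt hy, Real.sqrt_nonneg x, Real.sqrt_nonneg y]
  calc Real.sqrt (x+y) ≤ Real.sqrt ((Real.sqrt x + Real.sqrt y)^2) := Real.sqrt_le_sqrt h
    _ = Real.sqrt x + Real.sqrt y := Real.sqrt_sq (by positivity)

/-- Clamp to `[-1,1]`. -/
def Q (t : ℝ) : ℝ := max (-1) (min 1 t)

lemma Q_cont : Continuous Q := continuous_const.max (continuous_const.min continuous_id)

lemma Q_mem (t : ℝ) : Q t ∈ Icc (-1:ℝ) 1 :=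
  ⟨le_max_left _ _, max_le (by norm_num) (min_le_left _ _)⟩

lemma Q_eq {t : ℝ} (ht : t ∈ Icc (-1:ℝ) 1) : Q t = t := by
  unfold Q; rw [min_eq_right ht.2, max_eq_right ht.1]

lemma Q_neg (t : ℝ) : Q (-t) = - Q t := by
  rcases le_total t (-1) with h | h
  · rw [show Q t = -1 from by unfold Q; rw [min_eq_right (by linarith), max_eq_left h],
      show Q (-t) = 1 from by
        unfold Q; rw [min_eq_left (by linarith), max_eq_right (by norm_num)]]
    norm_num
  · rcases le_total 1 t with h' | h'
    · rw [show Q t = 1 from by unfold Q; rw [min_eq_left h', max_eq_right (by norm_num)],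
        show Q (-t) = -1 from by
          unfold Q; rw [min_eq_right (by linarith), max_eq_left (by linarith)]]
    · rw [Q_eq ⟨h, h'⟩, Q_eq ⟨by linarith, by linarith⟩]

variable {V : ℝ → ℝ}

/-- The length of the transition interval for the regularized profile. -/
noncomputable def Lfun (V : ℝ → ℝ) (κ : ℝ) : ℝ :=
  ∫ t in (0:ℝ)..1, (Real.sqrt (2 * V t + κ))⁻¹

/-- Lower bound: any admissible function has energy at least `c₀`. -/
lemma lower_bound (hV : Assumption1 V) {ℓ : ℝ} (hℓ : 0 ≤ ℓ) {u : ℝ → ℝ}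
    (hu : ContDiff ℝ 1 u) (ha : u (-ℓ) = -1) (hb : u ℓ = 1) :
    c0 V ≤ energy V (-ℓ) ℓ u := by
  have hVc : Continuous V := hV.smooth.continuous
  have hsc : Continuous fun s => Real.sqrt (2 * V s) :=
    (continuous_const.mul hVc).sqrt
  have hudiff : Differentiable ℝ u := hu.differentiable one_ne_zero
  have hduc : Continuous (deriv u) := hu.continuous_deriv le_rfl
  have huc : Continuous u := hudiff.continuous
  set G : ℝ → ℝ := fun t => ∫ s in (0:ℝ)..t, Real.sqrt (2 * V s) with hGdef
  have hGd : ∀ t, HasDerivAt G (Real.sqrt (2 * V t)) t := fun t =>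
    intervalIntegral.integral_hasDerivAt_right (hsc.intervalIntegrable _ _)
      (hsc.stronglyMeasurableAtFilter _ _) hsc.continuousAt
  have hwd : ∀ x, HasDerivAt (fun x => G (u x)) (Real.sqrt (2 * V (u x)) * deriv u x) x :=
    fun x => (hGd (u x)).comp x (hudiff x).hasDerivAt
  have h1 : (∫ x in (-ℓ)..ℓ, Real.sqrt (2 * V (u x)) * deriv u x) = G 1 - G (-1) := by
    have := intervalIntegral.integral_eq_sub_of_hasDerivAt (a := -ℓ) (b := ℓ)
      (f := fun x => G (u x))
      (f' := fun x => Real.sqrt (2 * V (u x)) * deriv u x)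
      (fun x _ => hwd x) (((hsc.comp huc).mul hduc).intervalIntegrable _ _)
    simpa [ha, hb] using this
  have h2 : G 1 - G (-1) = c0 V := by
    have hint : ∀ a b : ℝ, IntervalIntegrable (fun s => Real.sqrt (2 * V s)) volume a b :=
      fun a b => hsc.intervalIntegrable _ _
    have hadd := intervalIntegral.integral_add_adjacent_intervals
      (a := (-1:ℝ)) (b := 0) (c := 1) (f := fun s => Real.sqrt (2 * V s)) (hint _ _) (hint _ _)
    have hsymm : G (-1) = - ∫ s in (-1:ℝ)..0, Real.sqrt (2 * V s) :=
      intervalIntegral.integral_symm _ _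
    have hG1 : G 1 = ∫ s in (0:ℝ)..1, Real.sqrt (2 * V s) := rfl
    have hc0 : c0 V = ∫ s in (-1:ℝ)..1, Real.sqrt (2 * V s) := rfl
    rw [hG1, hsymm, hc0, ← hadd]; ring
  have h3 : (∫ x in (-ℓ)..ℓ, Real.sqrt (2 * V (u x)) * deriv u x) ≤ energy V (-ℓ) ℓ u := by
    unfold energy
    apply intervalIntegral.integral_mono_on (by linarith)
      (((hsc.comp huc).mul hduc).intervalIntegrable _ _)
      (((continuous_const.mul (hduc.pow 2)).add (hVc.comp huc)).intervalIntegrable _ _)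
    intro x _
    show Real.sqrt (2 * V (u x)) * deriv u x ≤ (1/2) * (deriv u x)^2 + V (u x)
    nlinarith [sq_nonneg (deriv u x - Real.sqrt (2 * V (u x))),
      Real.sq_sqrt (by nlinarith [hV.nonneg (u x)] : (0:ℝ) ≤ 2 * V (u x))]
  linarith

/-- Construction of a near-optimal profile for each `κ > 0`. -/
lemma exists_good (hV : Assumption1 V) {κ : ℝ} (hκ : 0 < κ) :
    ∃ u : ℝ → ℝ, ContDiff ℝ 1 u ∧ u (-(Lfun V κ)) = -1 ∧ u (Lfun V κ) = 1 ∧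
      energy V (-(Lfun V κ)) (Lfun V κ) u ≤ c0 V + 2 * Real.sqrt κ := by
  have hVc : Continuous V := hV.smooth.continuous
  obtain ⟨B, hB⟩ := isCompact_Icc.exists_bound_of_continuousOn
    (hVc.continuousOn (s := Icc (-1:ℝ) 1))
  have hBV : ∀ t, V (Q t) ≤ B := fun t =>
    (le_abs_self _).trans (by simpa [Real.norm_eq_abs] using hB (Q t) (Q_mem t))
  have hBnn : 0 ≤ B := le_trans (hV.nonneg _) (hBV 0)
  set M : ℝ := 2 * B + κ with hMdef
  have hMpos : 0 < M := by positivity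
  set G : ℝ → ℝ := fun t => 2 * V (Q t) + κ with hGdef
  have hGcont : Continuous G := (continuous_const.mul (hVc.comp Q_cont)).add continuous_const
  have hGlb : ∀ t, κ ≤ G t := fun t => by
    have := hV.nonneg (Q t); show κ ≤ 2 * V (Q t) + κ; linarith
  have hGpos : ∀ t, 0 < G t := fun t => lt_of_lt_of_le hκ (hGlb t)
  have hGub : ∀ t, G t ≤ M := fun t => by have := hBV t; simp only [hGdef, hMdef]; linarith
  have hsq : ∀ t, 0 < Real.sqrt (G t) := fun t => Real.sqrt_pos.mpr (hGpos t)
  set g : ℝ → ℝ := fun t => (Real.sqrt (G t))⁻¹ with hgdef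
  have hgcont : Continuous g := (Real.continuous_sqrt.comp hGcont).inv₀ fun t => (hsq t).ne'
  have hgpos : ∀ t, 0 < g t := fun t => inv_pos.mpr (hsq t)
  set φ : ℝ → ℝ := fun s => ∫ t in (0:ℝ)..s, g t with hφdef
  have hφd : ∀ s, HasDerivAt φ (g s) s := fun s =>
    intervalIntegral.integral_hasDerivAt_right (hgcont.intervalIntegrable _ _)
      (hgcont.stronglyMeasurableAtFilter _ _) hgcont.continuousAt
  have hφc : Continuous φ := continuous_iff_continuousAt.mpr fun s => (hφd s).continuousAt
  have hφm : StrictMono φ := strictMono_of_deriv_pos fun s => by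
    rw [(hφd s).deriv]; exact hgpos s
  have hglb : ∀ t, (Real.sqrt M)⁻¹ ≤ g t := fun t =>
    inv_anti₀ (hsq t) (Real.sqrt_le_sqrt (hGub t))
  have hMrpos : 0 < (Real.sqrt M)⁻¹ := inv_pos.mpr (Real.sqrt_pos.mpr hMpos)
  have key : ∀ s : ℝ, 0 ≤ s → (Real.sqrt M)⁻¹ * s ≤ φ s := by
    intro s hs
    have h1 : (∫ t in (0:ℝ)..s, (Real.sqrt M)⁻¹) ≤ φ s :=
      intervalIntegral.integral_mono_on hs (intervalIntegrable_const)
        (hgcont.intervalIntegrable _ _) (fun t _ => hglb t)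
    rwa [intervalIntegral.integral_const, sub_zero, smul_eq_mul, mul_comm] at h1
  have key2 : ∀ s : ℝ, s ≤ 0 → φ s ≤ (Real.sqrt M)⁻¹ * s := by
    intro s hs
    have h1 : (∫ t in s..(0:ℝ), (Real.sqrt M)⁻¹) ≤ ∫ t in s..(0:ℝ), g t :=
      intervalIntegral.integral_mono_on hs (intervalIntegrable_const)
        (hgcont.intervalIntegrable _ _) (fun t _ => hglb t)
    rw [intervalIntegral.integral_const, zero_sub, smul_eq_mul] at h1
    have h2 : φ s = - ∫ t in s..(0:ℝ), g t := intervalIntegral.integral_symm _ _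
    rw [h2]; nlinarith
  have htop : Tendsto φ atTop atTop :=
    tendsto_atTop_mono' atTop (eventually_atTop.2 ⟨0, fun s hs => key s hs⟩)
      (Tendsto.const_mul_atTop hMrpos tendsto_id)
  have hbot : Tendsto φ atBot atBot :=
    tendsto_atBot_mono' atBot (eventually_atBot.2 ⟨0, fun s hs => key2 s hs⟩)
      (Tendsto.const_mul_atBot hMrpos tendsto_id)
  have hsurj : Function.Surjective φ := hφc.surjective htop hbot
  set e := StrictMono.orderIsoOfSurjective φ hφm hsurj with hedef
  set u : ℝ → ℝ := fun y => e.symm y with hudef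
  have hucont : Continuous u := OrderIso.continuous e.symm
  have hinv : ∀ z, φ (u z) = z := fun z =>
    StrictMono.orderIsoOfSurjective_self_symm_apply φ hφm hsurj z
  have huφ : ∀ s, u (φ s) = s := fun s =>
    StrictMono.orderIsoOfSurjective_symm_apply_self φ hφm hsurj s
  have hud : ∀ y, HasDerivAt u (Real.sqrt (G (u y))) y := fun y => by
    have := HasDerivAt.of_local_left_inverse hucont.continuousAt (hφd (u y))
      (inv_ne_zero (hsq (u y)).ne') (.of_forall hinv)
    simpa [hgdef] using this
  have huC1 : ContDiff ℝ 1 u := by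
    refine contDiff_one_iff_deriv.mpr ⟨fun y => (hud y).differentiableAt, ?_⟩
    have hdu : deriv u = fun y => Real.sqrt (G (u y)) := funext fun y => (hud y).deriv
    rw [hdu]; exact Real.continuous_sqrt.comp (hGcont.comp hucont)
  have hφ1 : φ 1 = Lfun V κ := by
    apply intervalIntegral.integral_congr
    intro t ht
    have ht' : t ∈ Icc (0:ℝ) 1 := by rwa [uIcc_of_le (by norm_num : (0:ℝ) ≤ 1)] at ht
    simp only [hgdef, hGdef, Q_eq ⟨by linarith [ht'.1], ht'.2⟩]
  have hgneg : ∀ t, g (-t) = g t := fun t => by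
    simp only [hgdef, hGdef, Q_neg, hV.even]
  have hφm1 : φ (-1) = -(Lfun V κ) := by
    have h2 : (∫ t in (0:ℝ)..1, g (-t)) = ∫ t in (-1:ℝ)..0, g t := by
      simpa using intervalIntegral.integral_comp_neg (a := (0:ℝ)) (b := 1) (f := g)
    have h3 : (∫ t in (-1:ℝ)..0, g t) = φ 1 := by
      rw [← h2]; exact intervalIntegral.integral_congr fun t _ => hgneg t
    have h4 : φ (-1) = - ∫ t in (-1:ℝ)..0, g t := intervalIntegral.integral_symm _ _
    rw [h4, h3, hφ1]
  set ℓ : ℝ := Lfun V κ with hℓdef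
  have hu1 : u ℓ = 1 := by rw [← hφ1]; exact huφ 1
  have hum1 : u (-ℓ) = -1 := by rw [← hφm1]; exact huφ (-1)
  have hℓ0 : 0 ≤ ℓ := by
    apply intervalIntegral.integral_nonneg (by norm_num)
    intro t _; positivity
  have hmemu : ∀ x ∈ Icc (-ℓ) ℓ, u x ∈ Icc (-1:ℝ) 1 := fun x hx =>
    ⟨hum1 ▸ e.symm.monotone hx.1, hu1 ▸ e.symm.monotone hx.2⟩
  set f : ℝ → ℝ := fun s => (2 * V (Q s) + κ/2) * (Real.sqrt (G s))⁻¹ with hfdef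
  have hfcont : Continuous f :=
    ((continuous_const.mul (hVc.comp Q_cont)).add continuous_const).mul
      ((Real.continuous_sqrt.comp hGcont).inv₀ fun t => (hsq t).ne')
  have hstep1 : energy V (-ℓ) ℓ u = ∫ x in (-ℓ)..ℓ, Real.sqrt (G (u x)) • f (u x) := by
    unfold energy
    apply intervalIntegral.integral_congr
    intro x hx
    have hx' : x ∈ Icc (-ℓ) ℓ := by rwa [uIcc_of_le (by linarith)] at hx
    have hQu : Q (u x) = u x := Q_eq (hmemu x hx')
    have hne : Real.sqrt (G (u x)) ≠ 0 := (hsq _).ne'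
    have hGu : G (u x) = 2 * V (u x) + κ := by simp only [hGdef, hQu]
    have h1 : Real.sqrt (G (u x)) * f (u x) = 2 * V (u x) + κ / 2 := by
      simp only [hfdef, hQu]
      rw [mul_comm, mul_assoc, inv_mul_cancel₀ hne, mul_one]
    show (1/2 : ℝ) * (deriv u x)^2 + V (u x) = Real.sqrt (G (u x)) • f (u x)
    rw [(hud x).deriv, smul_eq_mul, h1, Real.sq_sqrt (hGpos _).le, hGu]
    ring
  have hstep2 : (∫ x in (-ℓ)..ℓ, Real.sqrt (G (u x)) • f (u x)) = ∫ s in (-1:ℝ)..1, f s := by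
    have := intervalIntegral.integral_comp_smul_deriv (a := -ℓ) (b := ℓ) (f := u)
      (f' := fun x => Real.sqrt (G (u x))) (g := f)
      (fun x _ => hud x) ((Real.continuous_sqrt.comp (hGcont.comp hucont)).continuousOn) hfcont
    rw [hum1, hu1] at this
    simpa [Function.comp] using this
  have hstep3 : (∫ s in (-1:ℝ)..1, f s) ≤
      ∫ s in (-1:ℝ)..1, (Real.sqrt (2 * V s) + Real.sqrt κ) := by
    apply intervalIntegral.integral_mono_on (by norm_num) (hfcont.intervalIntegrable _ _)
      ((((continuous_const.mul hVc).sqrt).add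
        continuous_const).intervalIntegrable _ _)
    intro s hs
    have hQs : Q s = s := Q_eq hs
    have hGs : G s = 2 * V s + κ := by simp only [hGdef, hQs]
    have h2V : (0:ℝ) ≤ 2 * V s := by nlinarith [hV.nonneg s]
    have hApos : (0:ℝ) < 2 * V s + κ := by linarith
    have h1 : f s ≤ Real.sqrt (2 * V s + κ) := by
      simp only [hfdef, hQs, hGs]
      rw [← div_eq_mul_inv, div_le_iff₀ (Real.sqrt_pos.mpr hApos)]
      rw [Real.mul_self_sqrt hApos.le]
      linarith
    have h2 : Real.sqrt (2 * V s + κ) ≤ Real.sqrt (2 * V s) + Real.sqrt κ :=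
      sqrt_add_le h2V hκ.le
    show f s ≤ Real.sqrt (2 * V s) + Real.sqrt κ
    linarith
  have hstep4 : (∫ s in (-1:ℝ)..1, (Real.sqrt (2 * V s) + Real.sqrt κ))
      = c0 V + 2 * Real.sqrt κ := by
    rw [intervalIntegral.integral_add (f := fun s => Real.sqrt (2 * V s)) (g := fun _ => Real.sqrt κ)
      (((continuous_const.mul hVc).sqrt).intervalIntegrable _ _)
      (intervalIntegrable_const), intervalIntegral.integral_const]
    have hc0 : c0 V = ∫ s in (-1:ℝ)..1, Real.sqrt (2 * V s) := rfl
    rw [← hc0]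
    norm_num
  exact ⟨u, huC1, hum1, hu1, by rw [hstep1, hstep2]; linarith⟩

/-- `Lfun V κ` can be made arbitrarily large with arbitrarily small `κ`. -/
lemma Lfun_large (hV : Assumption1 V) (N : ℝ) {κ₀ : ℝ} (hκ₀ : 0 < κ₀) :
    ∃ κ : ℝ, 0 < κ ∧ κ ≤ κ₀ ∧ N ≤ Lfun V κ := by
  have hVc : Continuous V := hV.smooth.continuous
  have hVinf : ContDiff ℝ ((⊤:ℕ∞) : WithTop ℕ∞) V := hV.smooth.of_le (by simp)
  have hdV : Differentiable ℝ V := hV.smooth.differentiable (by simp)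
  have hdVC : ContDiff ℝ ((⊤:ℕ∞) : WithTop ℕ∞) (deriv V) := (contDiff_infty_iff_deriv.mp hVinf).2
  have hddV : Differentiable ℝ (deriv V) :=
    hdVC.differentiable (by simp)
  have hddVc : Continuous (deriv (deriv V)) := (contDiff_infty_iff_deriv.mp hdVC).2.continuous
  obtain ⟨M₀, hM₀⟩ := isCompact_Icc.exists_bound_of_continuousOn
    (hddVc.continuousOn (s := Icc (0:ℝ) 1))
  set M : ℝ := max M₀ 1 with hMdef
  have hM1 : (1:ℝ) ≤ M := le_max_right _ _
  have hMpos : 0 < M := lt_of_lt_of_le one_pos hM1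
  have hdV1 : deriv V 1 = 0 := (hV.deriv_zero_iff 1 one_pos).mpr rfl
  have hV1 : V 1 = 0 := (hV.zero_iff 1 one_pos).mpr rfl
  -- |V'(s)| ≤ M (1-s) on [0,1]
  have hstep2 : ∀ s ∈ Icc (0:ℝ) 1, ‖deriv V s‖ ≤ M * (1 - s) := by
    intro s hs
    have := (convex_Icc (0:ℝ) 1).norm_image_sub_le_of_norm_deriv_le
      (fun x _ => hddV x) (fun x hx => (hM₀ x hx).trans (le_max_left M₀ 1))
      (right_mem_Icc.2 zero_le_one) hs
    rw [hdV1] at this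
    have h2 : ‖s - (1:ℝ)‖ = 1 - s := by
      rw [Real.norm_eq_abs, abs_sub_comm, abs_of_nonneg (by linarith [hs.2])]
    simpa [h2] using this
  -- V(s) ≤ M (1-s)^2 on [0,1]
  have hstep3 : ∀ s ∈ Icc (0:ℝ) 1, V s ≤ M * (1 - s)^2 := by
    intro s hs
    have hsub : Icc s 1 ⊆ Icc (0:ℝ) 1 := Icc_subset_Icc hs.1 le_rfl
    have := (convex_Icc s 1).norm_image_sub_le_of_norm_deriv_le
      (fun x _ => hdV x)
      (fun x hx => (hstep2 x (hsub hx)).trans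
        (by nlinarith [hx.1, hs.1, hs.2, hMpos] : M * (1 - x) ≤ M * (1 - s)))
      (right_mem_Icc.2 hs.2) (left_mem_Icc.2 hs.2)
    rw [hV1] at this
    have h2 : ‖s - (1:ℝ)‖ = 1 - s := by
      rw [Real.norm_eq_abs, abs_sub_comm, abs_of_nonneg (by linarith [hs.2])]
    rw [h2] at this
    have h3 : V s ≤ M * (1 - s) * (1 - s) := le_trans (le_abs_self _) (by simpa using this)
    nlinarith
  set a : ℝ := Real.sqrt (2 * M) with hadef
  have hapos : 0 < a := Real.sqrt_pos.mpr (by linarith)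
  -- choose κ
  set κ : ℝ := min κ₀ ((a * Real.exp (-(a * N)))^2) with hκdef
  have hκpos : 0 < κ := lt_min hκ₀ (by positivity)
  refine ⟨κ, hκpos, min_le_left _ _, ?_⟩
  set b : ℝ := Real.sqrt κ with hbdef
  have hbpos : 0 < b := Real.sqrt_pos.mpr hκpos
  -- pointwise bound: √(2 V t + κ) ≤ a (1-t) + b on [0,1]
  have hpt : ∀ t ∈ Icc (0:ℝ) 1, Real.sqrt (2 * V t + κ) ≤ a * (1 - t) + b := by
    intro t ht
    have h1 : Real.sqrt (2 * V t + κ) ≤ Real.sqrt (2 * V t) + b :=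
      sqrt_add_le (by nlinarith [hV.nonneg t]) hκpos.le
    have h2 : Real.sqrt (2 * V t) ≤ a * (1 - t) := by
      have h3 : 2 * V t ≤ 2 * M * (1 - t)^2 := by nlinarith [hstep3 t ht]
      calc Real.sqrt (2 * V t) ≤ Real.sqrt (2 * M * (1 - t)^2) := Real.sqrt_le_sqrt h3
        _ = a * (1 - t) := by
            rw [Real.sqrt_mul (by linarith : (0:ℝ) ≤ 2 * M),
              Real.sqrt_sq (by linarith [ht.2])]
    linarith
  -- the comparison integral
  have hgpos' : ∀ t ∈ Icc (0:ℝ) 1, 0 < a * (1 - t) + b := by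
    intro t ht
    nlinarith [ht.2, hapos, hbpos]
  have hcont1 : ContinuousOn (fun t => (a * (1 - t) + b)⁻¹) (Icc (0:ℝ) 1) := by
    apply ContinuousOn.inv₀
    · fun_prop
    · intro t ht; exact (hgpos' t ht).ne'
  have hmono : (∫ t in (0:ℝ)..1, (a * (1 - t) + b)⁻¹) ≤ Lfun V κ := by
    apply intervalIntegral.integral_mono_on (by norm_num)
    · exact (by rwa [uIcc_of_le (by norm_num : (0:ℝ) ≤ 1)] : ContinuousOn _ (uIcc (0:ℝ) 1)).intervalIntegrable
    · apply Continuous.intervalIntegrable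
      apply Continuous.inv₀
      · fun_prop
      · intro t
        refine (Real.sqrt_pos.mpr ?_).ne'
        nlinarith [hV.nonneg t]
    · intro t ht
      apply inv_anti₀
      · exact Real.sqrt_pos.mpr (by nlinarith [hV.nonneg t])
      · exact hpt t ht
  -- FTC for the comparison integral
  have hFTC : (∫ t in (0:ℝ)..1, (a * (1 - t) + b)⁻¹)
      = -(a⁻¹ * Real.log b) + a⁻¹ * Real.log (a + b) := by
    have hFd : ∀ t ∈ uIcc (0:ℝ) 1,
        HasDerivAt (fun t => -(a⁻¹) * Real.log (a * (1 - t) + b)) ((a * (1 - t) + b))⁻¹ t := by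
      intro t ht
      have ht' : t ∈ Icc (0:ℝ) 1 := by rwa [uIcc_of_le (by norm_num : (0:ℝ) ≤ 1)] at ht
      have hin : HasDerivAt (fun t : ℝ => a * (1 - t) + b) (-a) t := by
        have h1 : HasDerivAt (fun t : ℝ => 1 - t) (-1) t := by
          simpa using (hasDerivAt_id t).const_sub 1
        simpa using (h1.const_mul a).add_const b
      have hlog := hin.log (hgpos' t ht').ne'
      have := hlog.const_mul (-(a⁻¹))
      refine this.congr_deriv ?_
      have ha0 := hapos.ne'
      have hg0 := (hgpos' t ht').ne'
      field_simp
    have := intervalIntegral.integral_eq_sub_of_hasDerivAt hFd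
      ((by rwa [uIcc_of_le (by norm_num : (0:ℝ) ≤ 1)] :
        ContinuousOn _ (uIcc (0:ℝ) 1)).intervalIntegrable)
    rw [this]
    norm_num
  -- conclude
  have hba : b ≤ a * Real.exp (-(a * N)) := by
    calc b = Real.sqrt κ := rfl
      _ ≤ Real.sqrt ((a * Real.exp (-(a * N)))^2) := Real.sqrt_le_sqrt (min_le_right _ _)
      _ = a * Real.exp (-(a * N)) := Real.sqrt_sq (by positivity)
  have hlogb : Real.log b ≤ Real.log a - a * N := by
    calc Real.log b ≤ Real.log (a * Real.exp (-(a * N))) :=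
          Real.log_le_log hbpos hba
      _ = Real.log a + Real.log (Real.exp (-(a * N))) :=
          Real.log_mul hapos.ne' (Real.exp_pos _).ne'
      _ = Real.log a - a * N := by rw [Real.log_exp]; ring
  have hloga : Real.log a ≤ Real.log (a + b) := Real.log_le_log hapos (by linarith)
  have hfin : N ≤ -(a⁻¹ * Real.log b) + a⁻¹ * Real.log (a + b) := by
    have h1 : a⁻¹ * (a * N) = N := by field_simp
    have h2 : a⁻¹ * Real.log b ≤ a⁻¹ * (Real.log a - a * N) := by
      apply mul_le_mul_of_nonneg_left hlogb (by positivity)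
    have h3 : a⁻¹ * Real.log a ≤ a⁻¹ * Real.log (a + b) := by
      apply mul_le_mul_of_nonneg_left hloga (by positivity)
    nlinarith [h1, h2, h3]
  linarith [hmono, hFTC ▸ hfin]

/-- Continuity of `Lfun` on `[κ₁, ∞)`. -/
lemma Lfun_contOn (hV : Assumption1 V) {κ₁ : ℝ} (hκ₁ : 0 < κ₁) :
    ContinuousOn (Lfun V) (Ici κ₁) := by
  have hVc : Continuous V := hV.smooth.continuous
  have hc : Continuous fun κ : ℝ => ∫ t in (0:ℝ)..1, (Real.sqrt (2 * V t + max κ κ₁))⁻¹ := by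
    apply intervalIntegral.continuous_parametric_intervalIntegral_of_continuous'
    have h : Continuous fun p : ℝ × ℝ => (Real.sqrt (2 * V p.2 + max p.1 κ₁))⁻¹ := by
      apply Continuous.inv₀
      · apply Real.continuous_sqrt.comp
        fun_prop
      · intro p
        refine (Real.sqrt_pos.mpr ?_).ne'
        have h1 : κ₁ ≤ max p.1 κ₁ := le_max_right _ _
        nlinarith [hV.nonneg p.2]
    exact h
  apply hc.continuousOn.congr
  intro κ hκ
  simp only [Lfun, max_eq_left (mem_Ici.mp hκ)]

end FIMETC

open FIMETC Set in
/-- Convergence of the finite-interval minimal transition energy. -/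
theorem finite_interval_minimal_energy_tendsto_c0
    (V : ℝ → ℝ) (hV : Assumption1 V) :
    Tendsto
      (fun ℓ : ℝ => sInf {e : ℝ | ∃ u : ℝ → ℝ, ContDiff ℝ 1 u ∧
          u (-ℓ) = -1 ∧ u ℓ = 1 ∧ e = energy V (-ℓ) ℓ u})
      atTop (nhds (c0 V)) := by
  rw [Metric.tendsto_atTop]
  intro ε hε
  set κ₀ : ℝ := (ε/3)^2 with hκ₀def
  have hκ₀pos : 0 < κ₀ := by positivity
  refine ⟨max (Lfun V κ₀) 1, fun ℓ hℓ => ?_⟩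
  have hℓ1 : 1 ≤ ℓ := le_trans (le_max_right _ _) hℓ
  have hℓ0 : (0:ℝ) < ℓ := by linarith
  obtain ⟨κ₁, hκ₁pos, hκ₁le, hκ₁big⟩ := Lfun_large hV ℓ hκ₀pos
  have hIVT := intermediate_value_Icc' hκ₁le
    ((Lfun_contOn hV hκ₁pos).mono (Icc_subset_Ici_self))
  have hℓmem : ℓ ∈ Icc (Lfun V κ₀) (Lfun V κ₁) := ⟨le_trans (le_max_left _ _) hℓ, hκ₁big⟩
  obtain ⟨κ, hκmem, hκeq⟩ := hIVT hℓmem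
  have hκpos : 0 < κ := lt_of_lt_of_le hκ₁pos hκmem.1
  obtain ⟨u, huC1, hum1, hu1, hue⟩ := exists_good hV hκpos
  rw [hκeq] at hum1 hu1 hue
  set S := {e : ℝ | ∃ u : ℝ → ℝ, ContDiff ℝ 1 u ∧
      u (-ℓ) = -1 ∧ u ℓ = 1 ∧ e = energy V (-ℓ) ℓ u} with hSdef
  have hmem : energy V (-ℓ) ℓ u ∈ S := ⟨u, huC1, hum1, hu1, rfl⟩
  have hlb : ∀ x ∈ S, c0 V ≤ x := by
    rintro x ⟨v, hv, hv1, hv2, rfl⟩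
    exact lower_bound hV hℓ0.le hv hv1 hv2
  have h1 : c0 V ≤ sInf S := le_csInf ⟨_, hmem⟩ hlb
  have h2 : sInf S ≤ c0 V + 2 * Real.sqrt κ :=
    le_trans (csInf_le ⟨c0 V, fun x hx => hlb x hx⟩ hmem) hue
  have hsκ : Real.sqrt κ ≤ ε/3 := by
    calc Real.sqrt κ ≤ Real.sqrt κ₀ := Real.sqrt_le_sqrt hκmem.2
      _ = ε/3 := by rw [hκ₀def, Real.sqrt_sq (by positivity)]
  rw [Real.dist_eq, abs_lt]
  constructor <;> [linarith; linarith]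
end

section
/- Energy lower bound for a path performing a wasted excursion near +1 (combination of (M.e11) and (M.e12)): Assume V satisfies Assumption 1. There exists C < ∞ (depending only on V) such that for every δ ∈ (0, 1/2), every a < b, every continuously differentiable u : ℝ → ℝ, and all points a ≤ x₋ < x₀ < x₊ ≤ b with u(x₋) = 1 − δ, u(x₊) = 1 − δ and u(x₀) = δ, one has E_{(a,b)}(u) ≥ φ₊₁(u(a)) + φ₊₁(u(b)) + c₀ − C·δ. -/
open MeasureTheory

/-- `φ₊₁(v) = |∫_{v}^{1} √(2 V(s)) ds|`. -/
noncomputable def phiPlus (V : ℝ → ℝ) (v : ℝ) : ℝ :=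
  |∫ s in v..(1:ℝ), Real.sqrt (2 * V s)|

section Aux

variable (V : ℝ → ℝ)

/-- The primitive `Φ(v) = ∫_0^v √(2V)`. -/
noncomputable def Phi (v : ℝ) : ℝ := ∫ s in (0:ℝ)..v, Real.sqrt (2 * V s)

lemma f_cont (hV : Continuous V) : Continuous (fun s => Real.sqrt (2 * V s)) :=
  Real.continuous_sqrt.comp (continuous_const.mul hV)

/-- The Modica–Mortola lower bound on one interval. -/
lemma modica (hV : Continuous V) (hVnn : ∀ u, 0 ≤ V u)
    (u : ℝ → ℝ) (hu : ContDiff ℝ 1 u) (x1 x2 : ℝ) (h : x1 ≤ x2) :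
    |Phi V (u x2) - Phi V (u x1)| ≤ ∫ x in x1..x2, ((1/2) * (deriv u x)^2 + V (u x)) := by
  set f : ℝ → ℝ := fun s => Real.sqrt (2 * V s) with hf
  have hfc : Continuous f := f_cont V hV
  have hu' : Continuous (deriv u) := hu.continuous_deriv le_rfl
  have huc : Continuous u := hu.continuous
  have hg : ∀ x, HasDerivAt (fun y => Phi V (u y)) (f (u x) * deriv u x) x := by
    intro x
    have h1 : HasDerivAt (Phi V) (f (u x)) (u x) :=
      (hfc.integral_hasStrictDerivAt 0 (u x)).hasDerivAt
    exact h1.comp x ((hu.differentiable one_ne_zero).differentiableAt.hasDerivAt)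
  have hgint : IntervalIntegrable (fun x => f (u x) * deriv u x) volume x1 x2 :=
    ((hfc.comp huc).mul hu').intervalIntegrable _ _
  have hFTC : ∫ x in x1..x2, f (u x) * deriv u x
      = Phi V (u x2) - Phi V (u x1) :=
    intervalIntegral.integral_eq_sub_of_hasDerivAt (fun x _ => hg x) hgint
  rw [← hFTC]
  calc |∫ x in x1..x2, f (u x) * deriv u x|
      ≤ ∫ x in x1..x2, |f (u x) * deriv u x| :=
        intervalIntegral.abs_integral_le_integral_abs h
    _ ≤ ∫ x in x1..x2, ((1/2) * (deriv u x)^2 + V (u x)) := by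
        apply intervalIntegral.integral_mono_on h
          (((hfc.comp huc).mul hu').abs.intervalIntegrable _ _)
          (((continuous_const.mul (hu'.pow 2)).add (hV.comp huc)).intervalIntegrable _ _)
        intro x _
        show |f (u x) * deriv u x| ≤ (1/2) * (deriv u x)^2 + V (u x)
        have hVnn' : 0 ≤ 2 * V (u x) := by linarith [hVnn (u x)]
        have hsq : (f (u x))^2 = 2 * V (u x) := Real.sq_sqrt hVnn'
        have hfnn : 0 ≤ f (u x) := Real.sqrt_nonneg _
        have key : 0 ≤ (|deriv u x| - f (u x))^2 := sq_nonneg _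
        have habs : |f (u x) * deriv u x| = f (u x) * |deriv u x| := by
          rw [abs_mul, abs_of_nonneg hfnn]
        rw [habs]
        nlinarith [sq_abs (deriv u x)]

end Aux

/-- Energy lower bound for a path performing a wasted excursion near `+1` (combination of
(M.e11) and (M.e12)): if `u(x₋) = u(x₊) = 1 − δ` and `u(x₀) = δ` with
`a ≤ x₋ < x₀ < x₊ ≤ b`, then `E_{(a,b)}(u) ≥ φ₊₁(u(a)) + φ₊₁(u(b)) + c₀ − Cδ`. -/
theorem wasted_excursion_energy_lower_bound
    (V : ℝ → ℝ) (hV : Assumption1 V) :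
    ∃ C : ℝ, 0 < C ∧
      ∀ δ : ℝ, δ ∈ Set.Ioo (0:ℝ) (1/2) →
        ∀ a b : ℝ, a < b →
          ∀ u : ℝ → ℝ, ContDiff ℝ 1 u →
            ∀ xm x0 xp : ℝ, a ≤ xm → xm < x0 → x0 < xp → xp ≤ b →
              u xm = 1 - δ → u xp = 1 - δ → u x0 = δ →
              phiPlus V (u a) + phiPlus V (u b) + c0 V - C * δ ≤ energy V a b u := by
  have hVc : Continuous V := hV.smooth.continuous
  set f : ℝ → ℝ := fun s => Real.sqrt (2 * V s) with hfdef
  have hfc : Continuous f := f_cont V hVc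
  have hfnn : ∀ s, 0 ≤ f s := fun s => Real.sqrt_nonneg _
  have hfint : ∀ p q : ℝ, IntervalIntegrable f volume p q :=
    fun p q => hfc.intervalIntegrable p q
  -- uniform bound on [0,1]
  obtain ⟨x, _, hx⟩ := IsCompact.exists_isMaxOn (isCompact_Icc (a := (0:ℝ)) (b := 1))
    (Set.nonempty_Icc.2 zero_le_one) (hfc.continuousOn)
  set M : ℝ := f x + 1 with hMdef
  have hMpos : 0 < M := by have := hfnn x; linarith
  have hMb : ∀ s ∈ Set.Icc (0:ℝ) 1, f s ≤ M := fun s hs => by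
    have := hx hs; simp only [Set.mem_setOf_eq] at this; linarith
  refine ⟨6 * M, by linarith, ?_⟩
  intro δ hδ a b hab u hu xm x0 xp haxm hxm0 hx0p hxpb hum hup hu0
  obtain ⟨hδ0, hδh⟩ := hδ
  -- integrals of f over subintervals of [0,1] bounded by M * length
  have hsmall : ∀ p q : ℝ, 0 ≤ p → p ≤ q → q ≤ 1 → (∫ s in p..q, f s) ≤ M * (q - p) := by
    intro p q hp hpq hq
    calc (∫ s in p..q, f s) ≤ ∫ s in p..q, M := by
          apply intervalIntegral.integral_mono_on hpq (hfint p q) intervalIntegrable_const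
          intro s hs
          exact hMb s ⟨le_trans hp hs.1, le_trans hs.2 hq⟩
      _ = M * (q - p) := by rw [intervalIntegral.integral_const, smul_eq_mul, mul_comm]
  have hPhisub : ∀ p q : ℝ, Phi V q - Phi V p = ∫ s in p..q, f s := by
    intro p q
    rw [Phi, Phi, ← intervalIntegral.integral_interval_sub_left (hfint 0 q) (hfint 0 p)]
  have hphiP : ∀ v : ℝ, phiPlus V v = |Phi V 1 - Phi V v| := by
    intro v
    rw [phiPlus, hPhisub]
  -- c0 = 2 * ∫_0^1 f  (evenness)
  have hceven : c0 V = 2 * ∫ s in (0:ℝ)..1, f s := by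
    have h1 : (∫ s in (0:ℝ)..1, f (-s)) = ∫ s in (-1:ℝ)..(0:ℝ), f s := by
      simpa using intervalIntegral.integral_comp_neg (a := 0) (b := 1) f
    have heven : (fun s => f (-s)) = f := by
      funext s; simp only [hfdef]; rw [hV.even]
    rw [heven] at h1
    have hc : c0 V = (∫ s in (-1:ℝ)..(0:ℝ), f s) + ∫ s in (0:ℝ)..1, f s := by
      rw [c0, ← intervalIntegral.integral_add_adjacent_intervals (hfint (-1) 0) (hfint 0 1)]
    rw [hc, ← h1]; ring
  -- split [0,1] into [0,δ] ∪ [δ,1−δ] ∪ [1−δ,1]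
  have hsplit : (∫ s in (0:ℝ)..1, f s)
      = (∫ s in (0:ℝ)..δ, f s) + (∫ s in δ..(1-δ), f s) + ∫ s in (1-δ)..1, f s := by
    rw [intervalIntegral.integral_add_adjacent_intervals (hfint 0 δ) (hfint δ (1-δ)),
      intervalIntegral.integral_add_adjacent_intervals (hfint 0 (1-δ)) (hfint (1-δ) 1)]
  set A : ℝ := ∫ s in (1-δ)..1, f s with hAdef
  set B : ℝ := ∫ s in δ..(1-δ), f s with hBdef
  set D : ℝ := ∫ s in (0:ℝ)..δ, f s with hDdef
  have hAnn : 0 ≤ A := intervalIntegral.integral_nonneg (by linarith) (fun s _ => hfnn s)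
  have hDnn : 0 ≤ D := intervalIntegral.integral_nonneg (by linarith) (fun s _ => hfnn s)
  have hAle : A ≤ M * δ := by
    have h := hsmall (1-δ) 1 (by linarith) (by linarith) le_rfl
    have : M * (1 - (1-δ)) = M * δ := by ring
    linarith
  have hDle : D ≤ M * δ := by
    have h := hsmall 0 δ le_rfl (by linarith) (by linarith)
    have : M * (δ - 0) = M * δ := by ring
    linarith
  -- energy split
  have hEc : Continuous (fun x => (1/2) * (deriv u x)^2 + V (u x)) :=
    (continuous_const.mul ((hu.continuous_deriv le_rfl).pow 2)).add (hVc.comp hu.continuous)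
  have hEint : ∀ p q : ℝ, IntervalIntegrable
      (fun x => (1/2) * (deriv u x)^2 + V (u x)) volume p q :=
    fun p q => hEc.intervalIntegrable p q
  set E : ℝ → ℝ → ℝ := fun p q => ∫ x in p..q, ((1/2) * (deriv u x)^2 + V (u x)) with hEdef
  have hEsplit : energy V a b u = E a xm + E xm x0 + E x0 xp + E xp b := by
    rw [energy, hEdef]
    rw [← intervalIntegral.integral_add_adjacent_intervals (hEint a xp) (hEint xp b),
      ← intervalIntegral.integral_add_adjacent_intervals (hEint a x0) (hEint x0 xp),
      ← intervalIntegral.integral_add_adjacent_intervals (hEint a xm) (hEint xm x0)]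
  -- Modica bounds on the four pieces
  have h1 : |Phi V (1-δ) - Phi V (u a)| ≤ E a xm := by
    have := modica V hVc hV.nonneg u hu a xm haxm
    rwa [hum] at this
  have h2 : |Phi V δ - Phi V (1-δ)| ≤ E xm x0 := by
    have := modica V hVc hV.nonneg u hu xm x0 hxm0.le
    rwa [hum, hu0] at this
  have h3 : |Phi V (1-δ) - Phi V δ| ≤ E x0 xp := by
    have := modica V hVc hV.nonneg u hu x0 xp hx0p.le
    rwa [hup, hu0] at this
  have h4 : |Phi V (u b) - Phi V (1-δ)| ≤ E xp b := by
    have := modica V hVc hV.nonneg u hu xp b hxpb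
    rwa [hup] at this
  -- relate to phiPlus and A, B
  have hPA : Phi V 1 - Phi V (1-δ) = A := hPhisub (1-δ) 1
  have hPB : Phi V (1-δ) - Phi V δ = B := hPhisub δ (1-δ)
  have hB2 : B ≤ E xm x0 := le_trans (by rw [← hPB, abs_sub_comm]; exact le_abs_self _) h2
  have hB3 : B ≤ E x0 xp := le_trans (by rw [← hPB]; exact le_abs_self _) h3
  have hpa : phiPlus V (u a) ≤ A + E a xm := by
    rw [hphiP]
    calc |Phi V 1 - Phi V (u a)|
        ≤ |Phi V 1 - Phi V (1-δ)| + |Phi V (1-δ) - Phi V (u a)| := abs_sub_le _ _ _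
      _ ≤ A + E a xm := by
          rw [hPA, abs_of_nonneg hAnn]; linarith
  have hpb : phiPlus V (u b) ≤ A + E xp b := by
    rw [hphiP]
    calc |Phi V 1 - Phi V (u b)|
        ≤ |Phi V 1 - Phi V (1-δ)| + |Phi V (1-δ) - Phi V (u b)| := abs_sub_le _ _ _
      _ ≤ A + E xp b := by
          rw [hPA, abs_of_nonneg hAnn, abs_sub_comm]; linarith
  have hc0 : c0 V = 2 * (D + B + A) := by rw [hceven, hsplit]
  rw [hEsplit]
  linarith
end
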